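/- arXiv:1803.01953 — 7 statements merged into one kernel-verified Lean document; each statement's English description precedes it below -/
import Mathlib

section
/- Let F be a simple graph with clique number ω(F) ≥ 2. For every integer r with 2 ≤ r ≤ (ω(F)-1)^2, there exists a constant c > 0 such that for all sufficiently large n there is an r-uniform hypergraph on n vertices containing no Berge-F that has at least c·n^2 hyperedges. Consequently ex_r(n,F) = Ω(n^2) for all 2 ≤ r ≤ (ω(F)-1)^2. -/
open Filter

/-- `G` contains a copy of `F` (a subgraph isomorphic to `F`). -/
def ContainsCopy {α β : Type*} (F : SimpleGraph α) (G : SimpleGraph β) : Prop :=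
  ∃ f : α → β, Function.Injective f ∧ ∀ ⦃u v⦄, F.Adj u v → G.Adj (f u) (f v)

/-- The hypergraph `H` (a finite family of hyperedges) contains a Berge-`F`. -/
def IsBerge {α V : Type*} (F : SimpleGraph α) (H : Finset (Finset V)) : Prop :=
  ∃ (ψ : α → V) (φ : Sym2 α → Finset V),
    Function.Injective ψ ∧ Set.InjOn φ F.edgeSet ∧
    (∀ e ∈ F.edgeSet, φ e ∈ H) ∧
    ∀ ⦃u v⦄, F.Adj u v → ψ u ∈ φ s(u, v) ∧ ψ v ∈ φ s(u, v)

/-- `exr r n F`: max number of hyperedges of an `r`-uniform Berge-`F`-free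
hypergraph on `n` vertices. -/
noncomputable def exr {α : Type*} (r n : ℕ) (F : SimpleGraph α) : ℕ :=
  sSup {m | ∃ H : Finset (Finset (Fin n)),
    (∀ e ∈ H, e.card = r) ∧ ¬ IsBerge F H ∧ H.card = m}

/-- A hypergraph is linear if distinct hyperedges meet in at most one vertex. -/
def LinearHypergraph {V : Type*} [DecidableEq V] (H : Finset (Finset V)) : Prop :=
  ∀ e₁ ∈ H, ∀ e₂ ∈ H, e₁ ≠ e₂ → (e₁ ∩ e₂).card ≤ 1

/-- `exrL r n F`: max number of hyperedges of an `r`-uniform linear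
Berge-`F`-free hypergraph on `n` vertices. -/
noncomputable def exrL {α : Type*} (r n : ℕ) (F : SimpleGraph α) : ℕ :=
  sSup {m | ∃ H : Finset (Finset (Fin n)),
    (∀ e ∈ H, e.card = r) ∧ LinearHypergraph H ∧ ¬ IsBerge F H ∧ H.card = m}

/-- The Ramsey number of `F` and `G`. -/
noncomputable def ramsey {α β : Type*} (F : SimpleGraph α) (G : SimpleGraph β) : ℕ :=
  sInf {N | ∀ C : SimpleGraph (Fin N), ContainsCopy F C ∨ ContainsCopy G Cᶜ}

/-- The 2-shadow of a hypergraph. -/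
def shadow {V : Type*} (H : Finset (Finset V)) : SimpleGraph V where
  Adj u v := u ≠ v ∧ ∃ e ∈ H, u ∈ e ∧ v ∈ e
  symm := ⟨by rintro u v ⟨h, e, he, hu, hv⟩; exact ⟨h.symm, e, he, hv, hu⟩⟩
  loopless := ⟨fun u h => h.1 rfl⟩

/-- The graph Turán number `ex(n,F)`. -/
noncomputable def exGraph {α : Type*} (n : ℕ) (F : SimpleGraph α) : ℕ :=
  sSup {m | ∃ G : SimpleGraph (Fin n), ¬ ContainsCopy F G ∧ G.edgeSet.ncard = m}

/-- `ex(n, K_r, F)`: max number of `r`-cliques in an `F`-free graph on `n` vertices. -/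
noncomputable def exClique {α : Type*} (n r : ℕ) (F : SimpleGraph α) : ℕ :=
  sSup {m | ∃ G : SimpleGraph (Fin n), ¬ ContainsCopy F G ∧
    {s : Finset (Fin n) | G.IsNClique r s}.ncard = m}

/-- A `t`-admissible partition of the vertices of `F`: parts have size at most `t`
and between any two distinct parts there is at most one edge of `F`. -/
def IsAdmissible {α : Type*} [Fintype α] [DecidableEq α] (t : ℕ) (F : SimpleGraph α)
    (P : Finpartition (Finset.univ : Finset α)) : Prop :=
  (∀ A ∈ P.parts, A.card ≤ t) ∧
  ∀ A ∈ P.parts, ∀ B ∈ P.parts, A ≠ B →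
    {p : α × α | p.1 ∈ A ∧ p.2 ∈ B ∧ F.Adj p.1 p.2}.ncard ≤ 1

/-- The graph obtained from `F` by contracting each part of the partition `P`. -/
def contractGraph {α : Type*} [Fintype α] [DecidableEq α] (F : SimpleGraph α)
    (P : Finpartition (Finset.univ : Finset α)) : SimpleGraph {A // A ∈ P.parts} where
  Adj A B := A ≠ B ∧ ∃ v ∈ (A : Finset α), ∃ w ∈ (B : Finset α), F.Adj v w
  symm := ⟨by
    rintro A B ⟨hne, v, hv, w, hw, hadj⟩
    exact ⟨hne.symm, w, hw, v, hv, hadj.symm⟩⟩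
  loopless := ⟨by rintro A ⟨hne, -⟩; exact hne rfl⟩


/-- The hyperedge of the block `(x,y)` over `ZMod p`. -/
def eblk (p : ℕ) {k s : ℕ} (hk : 0 < k) (hs : 0 < s) (r : ℕ) (x y : ZMod p) :
    Finset (Fin k × ZMod p × Fin s) :=
  (Finset.univ : Finset (Fin r)).image fun j : Fin r =>
    (⟨j.val % k, Nat.mod_lt _ hk⟩, x + ((j.val % k : ℕ) : ZMod p) * y,
     ⟨j.val / k % s, Nat.mod_lt _ hs⟩)

lemma eblk_mem_snd {p k s r : ℕ} (hk : 0 < k) (hs : 0 < s) {x y : ZMod p}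
    {t : Fin k × ZMod p × Fin s} (ht : t ∈ eblk p hk hs r x y) :
    t.2.1 = x + (((t.1 : ℕ) : ℕ) : ZMod p) * y := by
  simp only [eblk, Finset.mem_image] at ht
  obtain ⟨j, -, rfl⟩ := ht
  rfl

lemma eblk_zero_mem {p k s r : ℕ} (hk : 0 < k) (hs : 0 < s) (hr : 0 < r) (x y : ZMod p) :
    ((⟨0, hk⟩ : Fin k), x, (⟨0, hs⟩ : Fin s)) ∈ eblk p hk hs r x y := by
  simp only [eblk, Finset.mem_image]
  refine ⟨⟨0, hr⟩, Finset.mem_univ _, ?_⟩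
  simp

lemma eblk_one_mem {p k s r : ℕ} (hk : 2 ≤ k) (hs : 0 < s) (hr : 2 ≤ r) (x y : ZMod p) :
    ((⟨1, by omega⟩ : Fin k), x + y, (⟨0, hs⟩ : Fin s)) ∈ eblk p (by omega) hs r x y := by
  simp only [eblk, Finset.mem_image]
  refine ⟨⟨1, by omega⟩, Finset.mem_univ _, ?_⟩
  have h1 : 1 % k = 1 := Nat.mod_eq_of_lt (by omega)
  have h2 : 1 / k = 0 := Nat.div_eq_of_lt (by omega)
  simp [h1, h2]

lemma eblk_card {p k s r : ℕ} (hk : 0 < k) (hs : 0 < s) (hr : r ≤ k * s) (x y : ZMod p) :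
    (eblk p hk hs r x y).card = r := by
  rw [eblk, Finset.card_image_of_injOn, Finset.card_univ, Fintype.card_fin]
  intro j _ j' _ h
  simp only [Prod.mk.injEq, Fin.mk.injEq] at h
  obtain ⟨h1, -, h3⟩ := h
  have hsk : s * k = k * s := Nat.mul_comm s k
  have hj : (j : ℕ) / k < s := (Nat.div_lt_iff_lt_mul hk).mpr (by
    have := j.isLt; omega)
  have hj' : (j' : ℕ) / k < s := (Nat.div_lt_iff_lt_mul hk).mpr (by
    have := j'.isLt; omega)
  rw [Nat.mod_eq_of_lt hj, Nat.mod_eq_of_lt hj'] at h3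
  have e1 := Nat.div_add_mod (j : ℕ) k
  have e2 := Nat.div_add_mod (j' : ℕ) k
  have e3 : k * ((j : ℕ) / k) = k * ((j' : ℕ) / k) := by rw [h3]
  exact Fin.ext (by omega)

lemma eblk_injective {p k s r : ℕ} (hk2 : 2 ≤ k) (hs : 0 < s) (hr2 : 2 ≤ r) :
    Function.Injective (fun q : ZMod p × ZMod p =>
      eblk p (show 0 < k by omega) hs r q.1 q.2) := by
  intro q q' h
  simp only at h
  have h0 : ((⟨0, by omega⟩ : Fin k), q.1, (⟨0, hs⟩ : Fin s)) ∈
      eblk p (show 0 < k by omega) hs r q'.1 q'.2 := by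
    rw [← h]; exact eblk_zero_mem _ hs (by omega) q.1 q.2
  have h1 : ((⟨1, by omega⟩ : Fin k), q.1 + q.2, (⟨0, hs⟩ : Fin s)) ∈
      eblk p (show 0 < k by omega) hs r q'.1 q'.2 := by
    rw [← h]; exact eblk_one_mem hk2 hs hr2 q.1 q.2
  have e0 := eblk_mem_snd _ hs h0
  have e1 := eblk_mem_snd _ hs h1
  simp only [Nat.cast_ofNat, Nat.cast_one, Nat.cast_zero] at e0 e1
  norm_num at e0 e1
  have : q.2 = q'.2 := by
    rw [e0] at e1
    exact add_left_cancel e1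
  exact Prod.ext e0 this

/-- The core combinatorial argument: no Berge-`K_{s+1}` structure in the block hypergraph. -/
lemma core_contradiction {p k s r : ℕ} [Fact p.Prime] (hk2 : 2 ≤ k) (hs : 0 < s)
    (hks : k ≤ s) (hkp : k ≤ p)
    {ι : Type*} (S : Finset ι) (hScard : s + 1 ≤ S.card)
    (t : ι → Fin k × ZMod p × Fin s) (ht : Set.InjOn t S)
    (B : ι → ι → ZMod p × ZMod p)
    (hmem : ∀ u ∈ S, ∀ v ∈ S, u ≠ v →
      t u ∈ eblk p (show 0 < k by omega) hs r (B u v).1 (B u v).2 ∧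
      t v ∈ eblk p (show 0 < k by omega) hs r (B u v).1 (B u v).2)
    (hBinj : ∀ u ∈ S, ∀ v ∈ S, u ≠ v → ∀ u' ∈ S, ∀ v' ∈ S, u' ≠ v' →
      B u v = B u' v' → s(u, v) = s(u', v')) : False := by
  haveI : NeZero p := ⟨(Fact.out : p.Prime).pos.ne'⟩
  have hcast : ∀ a b : Fin k, (((a : ℕ) : ℕ) : ZMod p) = (((b : ℕ) : ℕ) : ZMod p) → a = b := by
    intro a b h
    have := congrArg ZMod.val h
    rw [ZMod.val_cast_of_lt (lt_of_lt_of_le a.isLt hkp),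
      ZMod.val_cast_of_lt (lt_of_lt_of_le b.isLt hkp)] at this
    exact Fin.ext this
  have hI : ∀ u ∈ S, ∀ v ∈ S, u ≠ v →
      (t u).2.1 = (B u v).1 + (((t u).1 : ℕ) : ZMod p) * (B u v).2 ∧
      (t v).2.1 = (B u v).1 + (((t v).1 : ℕ) : ZMod p) * (B u v).2 := by
    intro u hu v hv hne
    obtain ⟨m1, m2⟩ := hmem u hu v hv hne
    exact ⟨eblk_mem_snd _ hs m1, eblk_mem_snd _ hs m2⟩
  have hcol : ∀ u ∈ S, ∀ v ∈ S, u ≠ v → (t u).1 = (t v).1 → (t u).2.1 = (t v).2.1 := by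
    intro u hu v hv hne h1
    obtain ⟨e1, e2⟩ := hI u hu v hv hne
    rw [e1, e2, h1]
  have htwo : ∀ u ∈ S, ∀ v ∈ S, ∀ w ∈ S, u ≠ v → u ≠ w → v ≠ w →
      (t u).1 = (t v).1 → (t w).1 ≠ (t u).1 → False := by
    intro u hu v hv w hw huv huw hvw h1 hw1
    have h2 : (t u).2.1 = (t v).2.1 := hcol u hu v hv huv h1
    obtain ⟨pu, pw⟩ := hI u hu w hw huw
    obtain ⟨qv, qw⟩ := hI v hv w hw hvw
    have hPQ : B u w ≠ B v w := by
      intro hEq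
      have := hBinj u hu w hw huw v hv w hw hvw hEq
      rw [Sym2.eq_iff] at this
      rcases this with ⟨h, -⟩ | ⟨h, -⟩
      · exact huv h
      · exact huw h
    set Au : ZMod p := (((t u).1 : ℕ) : ZMod p) with hAu
    set Aw : ZMod p := (((t w).1 : ℕ) : ZMod p) with hAw
    -- equations
    have eq1 : (B u w).1 + Au * (B u w).2 = (B v w).1 + Au * (B v w).2 := by
      rw [← pu, h2, qv, hAu, h1]
    have eq2 : (B u w).1 + Aw * (B u w).2 = (B v w).1 + Aw * (B v w).2 := by
      rw [← pw, qw]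
    have key : (Au - Aw) * ((B u w).2 - (B v w).2) = 0 := by
      linear_combination eq1 - eq2
    rcases mul_eq_zero.mp key with h | h
    · exact hw1 (hcast _ _ (sub_eq_zero.mp h)).symm
    · have hy : (B u w).2 = (B v w).2 := by rwa [sub_eq_zero] at h
      have hx : (B u w).1 = (B v w).1 := by
        have := eq2; rw [hy] at this; exact add_right_cancel this
      exact hPQ (Prod.ext hx hy)
  by_cases hc : ∀ u ∈ S, ∀ v ∈ S, u ≠ v → (t u).1 ≠ (t v).1
  · have hcard : S.card ≤ k := by
      have := Finset.card_le_card_of_injOn (fun u => (t u).1)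
        (fun u _ => Finset.mem_univ ((t u).1))
        (fun a ha b hb h => by
          by_contra hne
          exact hc a ha b hb hne h)
      simpa using this
    omega
  · push_neg at hc
    obtain ⟨u, hu, v, hv, hne, h1⟩ := hc
    have hall : ∀ w ∈ S, (t w).1 = (t u).1 := by
      intro w hw
      by_cases hwu : w = u
      · rw [hwu]
      · by_cases hwv : w = v
        · rw [hwv, ← h1]
        · by_contra hne'
          exact htwo u hu v hv w hw hne (fun h => hwu h.symm) (fun h => hwv h.symm) h1 hne'
    have hall2 : ∀ w ∈ S, (t w).2.1 = (t u).2.1 := by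
      intro w hw
      by_cases hwu : w = u
      · rw [hwu]
      · exact (hcol u hu w hw (fun h => hwu h.symm) (hall w hw).symm).symm
    have hinj3 : Set.InjOn (fun w => (t w).2.2) S := by
      intro a ha b hb h
      apply ht ha hb
      have e1 : (t a).1 = (t b).1 := by rw [hall a ha, hall b hb]
      have e2 : (t a).2.1 = (t b).2.1 := by rw [hall2 a ha, hall2 b hb]
      exact Prod.ext e1 (Prod.ext e2 h)
    have hcard : S.card ≤ s := by
      have := Finset.card_le_card_of_injOn (fun w => (t w).2.2)
        (fun w _ => Finset.mem_univ ((t w).2.2)) hinj3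
      simpa using this
    omega



/-- If `ω(F) ≥ 2` and `2 ≤ r ≤ (ω(F)-1)^2`, then there is `c > 0` such that
for all large `n` there is an `r`-uniform Berge-`F`-free hypergraph on `n` vertices
with at least `c n^2` hyperedges; consequently `exr r n F = Ω(n^2)`. -/
theorem stmt1 {α : Type*} [Fintype α] (F : SimpleGraph α)
    (hω : 2 ≤ F.cliqueNum)
    (r : ℕ) (hr2 : 2 ≤ r) (hr : r ≤ (F.cliqueNum - 1) ^ 2) :
    ∃ c : ℝ, 0 < c ∧ ∀ᶠ n : ℕ in atTop,
      (∃ H : Finset (Finset (Fin n)),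
        (∀ e ∈ H, e.card = r) ∧ ¬ IsBerge F H ∧ c * (n : ℝ) ^ 2 ≤ (H.card : ℝ)) ∧
      c * (n : ℝ) ^ 2 ≤ (exr r n F : ℝ) := by
  classical
  obtain ⟨S₀, hS₀⟩ := F.exists_isNClique_cliqueNum
  set s := F.cliqueNum - 1 with hs_def
  have hs2 : 2 ≤ s := by
    by_contra h
    have h1 : s ≤ 1 := by omega
    have h2 := Nat.pow_le_pow_left h1 2
    simp only [one_pow] at h2
    omega
  set k := max 2 ((r + s - 1) / s) with hk_def
  have hk2 : 2 ≤ k := le_max_left _ _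
  have hsk : k ≤ s := by
    apply max_le hs2
    rw [Nat.div_le_iff_le_mul_add_pred (by omega)]
    have hss : s ^ 2 = s * s := sq s
    omega
  have hrk : r ≤ k * s := by
    have h1 := Nat.div_add_mod (r + s - 1) s
    have h2 : (r + s - 1) % s < s := Nat.mod_lt _ (by omega)
    have h3 : (r + s - 1) / s ≤ k := le_max_right _ _
    have h4 : r ≤ s * ((r + s - 1) / s) := by omega
    calc r ≤ s * ((r + s - 1) / s) := h4
      _ ≤ s * k := Nat.mul_le_mul_left _ h3
      _ = k * s := Nat.mul_comm _ _
  set K := k * s with hK_def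
  have hK0 : 0 < K := by
    have : 2 * 2 ≤ k * s := Nat.mul_le_mul hk2 hs2
    omega
  refine ⟨1 / (4 * (K : ℝ) ^ 2), by positivity, ?_⟩
  rw [eventually_atTop]
  refine ⟨2 * K * k, fun n hn => ?_⟩
  set M := n / K with hM_def
  have hM2k : 2 * k ≤ M := by
    rw [hM_def]
    rw [Nat.le_div_iff_mul_le hK0]
    calc 2 * k * K = 2 * K * k := by ring
      _ ≤ n := hn
  obtain ⟨p, hp, hpl, hpu⟩ := Nat.exists_prime_lt_and_le_two_mul (M / 2) (by omega)
  haveI : Fact p.Prime := ⟨hp⟩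
  haveI : NeZero p := ⟨hp.pos.ne'⟩
  have hkp : k ≤ p := by omega
  have hpM : p ≤ M := by omega
  have hKpn : K * p ≤ n := by
    calc K * p ≤ K * M := Nat.mul_le_mul_left _ hpM
      _ ≤ n := by rw [hM_def]; exact Nat.mul_div_le n K
  have h2Kp : n + 1 ≤ 2 * (K * p) := by
    have h5 : M + 1 ≤ 2 * p := by omega
    have h6 : n < K * M + K := by
      have e0 : K * M = K * (n / K) := by rw [hM_def]
      have := Nat.div_add_mod n K
      have := Nat.mod_lt n hK0
      omega
    have h7 : K * (M + 1) ≤ K * (2 * p) := Nat.mul_le_mul_left _ h5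
    have h8 : K * (M + 1) = K * M + K := by ring
    have h9 : K * (2 * p) = 2 * (K * p) := by ring
    omega
  have hkpos : 0 < k := by omega
  have hspos : 0 < s := by omega
  have hcardT : Fintype.card (Fin k × ZMod p × Fin s) = K * p := by
    simp [ZMod.card, hK_def]
    ring
  obtain ⟨ι⟩ : Nonempty (Fin k × ZMod p × Fin s ↪ Fin n) :=
    Function.Embedding.nonempty_of_card_le (by
      rw [hcardT, Fintype.card_fin]; exact hKpn)
  set Hyp : Finset (Finset (Fin n)) :=
    (Finset.univ : Finset (ZMod p × ZMod p)).image
      (fun q => (eblk p hkpos hspos r q.1 q.2).map ι) with hHyp_def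
  have huni : ∀ e ∈ Hyp, e.card = r := by
    intro e he
    simp only [hHyp_def, Finset.mem_image] at he
    obtain ⟨q, -, rfl⟩ := he
    rw [Finset.card_map, eblk_card hkpos hspos hrk]
  have hcard : Hyp.card = p * p := by
    rw [hHyp_def, Finset.card_image_of_injective _
      (fun a b h => eblk_injective hk2 hspos hr2 (Finset.map_injective ι h)),
      Finset.card_univ, Fintype.card_prod, ZMod.card]
  have hScard : S₀.card = s + 1 := by
    have := hS₀.card_eq
    omega
  have hadj : ∀ u ∈ S₀, ∀ v ∈ S₀, u ≠ v → F.Adj u v := by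
    intro u hu v hv hne
    exact hS₀.isClique hu hv hne
  have hfree : ¬ IsBerge F Hyp := by
    rintro ⟨ψ, φ, hψ, hφI, hφH, hφm⟩
    have hpair : ∀ u v : α, ∃ q : ZMod p × ZMod p, u ∈ S₀ → v ∈ S₀ → u ≠ v →
        φ s(u, v) = (eblk p hkpos hspos r q.1 q.2).map ι := by
      intro u v
      by_cases h : u ∈ S₀ ∧ v ∈ S₀ ∧ u ≠ v
      · obtain ⟨hu, hv, hne⟩ := h
        have hmem : φ s(u, v) ∈ Hyp :=
          hφH _ (F.mem_edgeSet.mpr (hadj u hu v hv hne))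
        simp only [hHyp_def, Finset.mem_image] at hmem
        obtain ⟨q, -, hq⟩ := hmem
        exact ⟨q, fun _ _ _ => hq.symm⟩
      · exact ⟨(0, 0), fun h1 h2 h3 => absurd ⟨h1, h2, h3⟩ h⟩
    choose B hB using hpair
    have hT : ∀ u : α, ∃ tu : Fin k × ZMod p × Fin s, u ∈ S₀ → ι tu = ψ u := by
      intro u
      by_cases hu : u ∈ S₀
      · obtain ⟨v, hv, hvne⟩ := Finset.exists_mem_ne (show 1 < S₀.card by omega) u
        have hne : u ≠ v := hvne.symm
        have hmem := (hφm (hadj u hu v hv hne)).1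
        rw [hB u v hu hv hne, Finset.mem_map] at hmem
        obtain ⟨tu, -, htu⟩ := hmem
        exact ⟨tu, fun _ => htu⟩
      · exact ⟨(⟨0, hkpos⟩, 0, ⟨0, hspos⟩), fun h => absurd h hu⟩
    choose t ht using hT
    have htinj : Set.InjOn t S₀ := by
      intro a ha b hb h
      apply hψ
      rw [← ht a ha, ← ht b hb, h]
    have hmem2 : ∀ u ∈ S₀, ∀ v ∈ S₀, u ≠ v →
        t u ∈ eblk p hkpos hspos r (B u v).1 (B u v).2 ∧
        t v ∈ eblk p hkpos hspos r (B u v).1 (B u v).2 := by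
      intro u hu v hv hne
      have h1 := hφm (hadj u hu v hv hne)
      rw [hB u v hu hv hne] at h1
      constructor
      · rw [← ht u hu] at h1
        exact (Finset.mem_map' ι).mp h1.1
      · rw [← ht v hv] at h1
        exact (Finset.mem_map' ι).mp h1.2
    have hBinj : ∀ u ∈ S₀, ∀ v ∈ S₀, u ≠ v → ∀ u' ∈ S₀, ∀ v' ∈ S₀, u' ≠ v' →
        B u v = B u' v' → s(u, v) = s(u', v') := by
      intro u hu v hv hne u' hu' v' hv' hne' hq
      apply hφI (F.mem_edgeSet.mpr (hadj u hu v hv hne))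
        (F.mem_edgeSet.mpr (hadj u' hu' v' hv' hne'))
      rw [hB u v hu hv hne, hB u' v' hu' hv' hne', hq]
    exact core_contradiction hk2 hspos hsk hkp S₀ (by omega) t htinj B hmem2 hBinj
  have hnum : 1 / (4 * (K : ℝ) ^ 2) * (n : ℝ) ^ 2 ≤ (Hyp.card : ℝ) := by
    have hcast : (n : ℝ) ≤ 2 * (K : ℝ) * (p : ℝ) := by
      have : (n : ℕ) ≤ 2 * (K * p) := by omega
      calc (n : ℝ) ≤ ((2 * (K * p) : ℕ) : ℝ) := by exact_mod_cast this
        _ = 2 * (K : ℝ) * (p : ℝ) := by push_cast; ring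
    have h1 : (n : ℝ) ^ 2 ≤ (2 * (K : ℝ) * (p : ℝ)) ^ 2 :=
      pow_le_pow_left₀ (Nat.cast_nonneg n) hcast 2
    have hK' : (0 : ℝ) < 4 * (K : ℝ) ^ 2 := by positivity
    rw [hcard]
    rw [div_mul_eq_mul_div, one_mul, div_le_iff₀ hK']
    push_cast
    nlinarith [h1]
  refine ⟨⟨Hyp, huni, hfree, hnum⟩, ?_⟩
  have hle : Hyp.card ≤ exr r n F := by
    apply le_csSup
    · refine ⟨Fintype.card (Finset (Fin n)), ?_⟩
      rintro m ⟨H', -, -, rfl⟩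
      calc H'.card ≤ (Finset.univ : Finset (Finset (Fin n))).card := Finset.card_le_univ H'
        _ = Fintype.card (Finset (Fin n)) := Finset.card_univ
    · exact ⟨Hyp, huni, hfree, rfl⟩
  calc 1 / (4 * (K : ℝ) ^ 2) * (n : ℝ) ^ 2 ≤ (Hyp.card : ℝ) := hnum
    _ ≤ (exr r n F : ℝ) := Nat.cast_le.mpr hle
end

section
/- Let F be a simple graph with chromatic number χ(F) ≥ 3. For every integer r with 2 ≤ r < χ(F), there exists a constant c > 0 such that for all sufficiently large n there is an r-uniform linear hypergraph on n vertices containing no Berge-F that has at least c·n^2 hyperedges. Consequently ex^L_r(n,F) = Ω(n^2) for all 2 ≤ r < χ(F). -/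
open Filter

namespace Stmt3Aux


variable {r p n : ℕ}

def emb (r p n : ℕ) [NeZero p] (hrp : r * p ≤ n) (i : Fin r) (t : ZMod p) : Fin n :=
  ⟨i * p + t.val, by
    have h1 : t.val < p := ZMod.val_lt t
    have h2 : (i : ℕ) < r := i.isLt
    calc (i : ℕ) * p + t.val < (i:ℕ) * p + p := Nat.add_lt_add_left h1 _
    _ = ((i:ℕ)+1) * p := by ring
    _ ≤ r * p := Nat.mul_le_mul_right _ (by omega)
    _ ≤ n := hrp⟩

lemma emb_inj [NeZero p] (hrp : r * p ≤ n) {i j : Fin r} {t s : ZMod p}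
    (h : emb r p n hrp i t = emb r p n hrp j s) : i = j ∧ t = s := by
  have h' : (i:ℕ) * p + t.val = (j:ℕ) * p + s.val := congrArg Fin.val h
  have ht := ZMod.val_lt t
  have hs := ZMod.val_lt s
  have hij : (i:ℕ) = j := by
    rcases Nat.lt_trichotomy (i:ℕ) (j:ℕ) with hlt | heq | hgt
    · have h2 : ((i:ℕ)+1) * p ≤ (j:ℕ) * p := Nat.mul_le_mul_right _ (by omega)
      have h3 : ((i:ℕ)+1) * p = (i:ℕ) * p + p := by ring
      omega
    · exact heq
    · have h2 : ((j:ℕ)+1) * p ≤ (i:ℕ) * p := Nat.mul_le_mul_right _ (by omega)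
      have h3 : ((j:ℕ)+1) * p = (j:ℕ) * p + p := by ring
      omega
  refine ⟨Fin.ext hij, ZMod.val_injective p ?_⟩
  have h4 : (i:ℕ) * p = (j:ℕ) * p := by rw [hij]
  omega

def edgeH (r p n : ℕ) [NeZero p] (hrp : r * p ≤ n) (x a : ZMod p) : Finset (Fin n) :=
  Finset.univ.image (fun i : Fin r => emb r p n hrp i (x + ((i:ℕ):ZMod p) * a))

lemma mem_edgeH [NeZero p] (hrp : r * p ≤ n) {x a : ZMod p} {v : Fin n} :
    v ∈ edgeH r p n hrp x a ↔ ∃ i : Fin r, emb r p n hrp i (x + ((i:ℕ):ZMod p) * a) = v := by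
  simp [edgeH]

lemma card_edgeH [NeZero p] (hrp : r * p ≤ n) (x a : ZMod p) :
    (edgeH r p n hrp x a).card = r := by
  rw [edgeH, Finset.card_image_of_injective _ (fun i j h => (emb_inj hrp h).1),
    Finset.card_univ, Fintype.card_fin]

lemma edgeH_inj [NeZero p] (hrp : r * p ≤ n) (hr2 : 2 ≤ r) {x a x' a' : ZMod p}
    (h : edgeH r p n hrp x a = edgeH r p n hrp x' a') : x = x' ∧ a = a' := by
  have key : ∀ i : Fin r, ∃ j : Fin r, (i : ℕ) = (j : ℕ) ∧
      x' + ((j:ℕ):ZMod p) * a' = x + ((i:ℕ):ZMod p) * a := by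
    intro i
    have hm : emb r p n hrp i (x + ((i:ℕ):ZMod p) * a) ∈ edgeH r p n hrp x' a' := by
      rw [← h, mem_edgeH]; exact ⟨i, rfl⟩
    obtain ⟨j, hj⟩ := (mem_edgeH hrp).1 hm
    obtain ⟨hji, hval⟩ := emb_inj hrp hj
    exact ⟨j, by rw [hji], hval⟩
  obtain ⟨j0, hj0, hv0⟩ := key ⟨0, by omega⟩
  obtain ⟨j1, hj1, hv1⟩ := key ⟨1, by omega⟩
  simp only [← hj0] at hv0
  simp only [← hj1] at hv1
  push_cast at hv0 hv1
  constructor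
  · linear_combination -hv0
  · linear_combination hv0 - hv1

/-- The hypergraph. -/
def hyp (r p n : ℕ) [NeZero p] (hrp : r * p ≤ n) : Finset (Finset (Fin n)) :=
  Finset.univ.image (fun xa : ZMod p × ZMod p => edgeH r p n hrp xa.1 xa.2)

lemma card_hyp [NeZero p] (hrp : r * p ≤ n) (hr2 : 2 ≤ r) :
    (hyp r p n hrp).card = p * p := by
  rw [hyp, Finset.card_image_of_injective, Finset.card_univ]
  · simp [ZMod.card]
  · rintro ⟨x, a⟩ ⟨x', a'⟩ h
    obtain ⟨h1, h2⟩ := edgeH_inj hrp hr2 h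
    simp_all

lemma uniform_hyp [NeZero p] (hrp : r * p ≤ n) :
    ∀ e ∈ hyp r p n hrp, e.card = r := by
  intro e he
  obtain ⟨⟨x, a⟩, -, rfl⟩ := Finset.mem_image.1 he
  exact card_edgeH hrp x a

lemma linear_hyp (hp : p.Prime) [NeZero p] (hrp : r * p ≤ n) (hrlt : r < p) :
    ∀ e₁ ∈ hyp r p n hrp, ∀ e₂ ∈ hyp r p n hrp, e₁ ≠ e₂ → (e₁ ∩ e₂).card ≤ 1 := by
  haveI := Fact.mk hp
  intro e₁ he₁ e₂ he₂ hne
  obtain ⟨⟨x, a⟩, -, rfl⟩ := Finset.mem_image.1 he₁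
  obtain ⟨⟨x', a'⟩, -, rfl⟩ := Finset.mem_image.1 he₂
  rw [Finset.card_le_one]
  intro u hu v hv
  rw [Finset.mem_inter] at hu hv
  obtain ⟨i, hi⟩ := (mem_edgeH hrp).1 hu.1
  obtain ⟨i', hi'⟩ := (mem_edgeH hrp).1 hu.2
  obtain ⟨j, hj⟩ := (mem_edgeH hrp).1 hv.1
  obtain ⟨j', hj'⟩ := (mem_edgeH hrp).1 hv.2
  obtain ⟨hii, hiv⟩ := emb_inj hrp (hi.trans hi'.symm)
  obtain ⟨hjj, hjv⟩ := emb_inj hrp (hj.trans hj'.symm)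
  subst hii hjj
  by_cases hij : i = j
  · subst hij; rw [← hi, ← hj]
  · exfalso
    have hcast : ((i:ℕ):ZMod p) ≠ ((j:ℕ):ZMod p) := by
      intro hc
      apply hij
      have := congrArg ZMod.val hc
      rw [ZMod.val_natCast_of_lt (lt_trans i.isLt hrlt),
        ZMod.val_natCast_of_lt (lt_trans j.isLt hrlt)] at this
      exact Fin.ext this
    have hkey : (((i:ℕ):ZMod p) - ((j:ℕ):ZMod p)) * (a - a') = 0 := by
      linear_combination hiv - hjv
    rcases mul_eq_zero.1 hkey with h0 | h0
    · exact hcast (by linear_combination h0)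
    · have ha : a = a' := by linear_combination h0
      have hx : x = x' := by
        subst ha
        linear_combination hiv
      exact hne (by rw [ha, hx])

lemma colorable_shadow [NeZero p] (hrp : r * p ≤ n) (hr1 : 1 ≤ r) :
    (shadow (hyp r p n hrp)).Colorable r := by
  refine ⟨SimpleGraph.Coloring.mk (fun v => ⟨min (v.val / p) (r-1), by omega⟩) ?_⟩
  rintro u v ⟨huv, e, he, hu, hv⟩
  obtain ⟨⟨x, a⟩, -, rfl⟩ := Finset.mem_image.1 he
  obtain ⟨i, hi⟩ := (mem_edgeH hrp).1 hu
  obtain ⟨j, hj⟩ := (mem_edgeH hrp).1 hv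
  have hij : i ≠ j := by
    rintro rfl
    exact huv (hi.symm.trans hj)
  have hdiv : ∀ (k : Fin r) (t : ZMod p), (emb r p n hrp k t).val / p = (k : ℕ) := by
    intro k t
    have ht : t.val < p := ZMod.val_lt t
    have hp0 : 0 < p := Nat.pos_of_ne_zero (NeZero.ne p)
    show ((k:ℕ) * p + t.val) / p = (k:ℕ)
    rw [mul_comm, Nat.mul_add_div hp0, Nat.div_eq_of_lt ht, Nat.add_zero]
  intro hcol
  apply hij
  have : min (u.val / p) (r-1) = min (v.val / p) (r-1) := congrArg Fin.val hcol
  rw [← hi, ← hj, hdiv, hdiv, min_eq_left (by omega), min_eq_left (by omega)] at this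
  exact Fin.ext this


lemma berge_colorable {α V : Type*} {F : SimpleGraph α} {H : Finset (Finset V)} {r : ℕ}
    (hB : IsBerge F H) (hc : (shadow H).Colorable r) : F.Colorable r := by
  obtain ⟨C⟩ := hc
  obtain ⟨ψ, φ, hψ, -, hmem, hcov⟩ := hB
  refine ⟨SimpleGraph.Coloring.mk (fun a => C (ψ a)) ?_⟩
  intro u v hadj
  have hsh : (shadow H).Adj (ψ u) (ψ v) := by
    refine ⟨fun h => hadj.ne (hψ h), φ s(u, v), hmem _ ((F.mem_edgeSet).2 hadj), ?_, ?_⟩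
    · exact (hcov hadj).1
    · exact (hcov hadj).2
  exact C.valid hsh

end Stmt3Aux

/-- If `χ(F) ≥ 3` and `2 ≤ r < χ(F)`, then there is `c > 0` such that for all
large `n` there is an `r`-uniform linear Berge-`F`-free hypergraph on `n` vertices with at
least `c n^2` hyperedges; consequently `ex^L_r(n,F) = Ω(n^2)`. -/
theorem stmt3 {α : Type*} [Fintype α] (F : SimpleGraph α)
    (hχ : 3 ≤ F.chromaticNumber)
    (r : ℕ) (hr2 : 2 ≤ r) (hr : (r : ℕ∞) < F.chromaticNumber) :
    ∃ c : ℝ, 0 < c ∧ ∀ᶠ n : ℕ in atTop,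
      (∃ H : Finset (Finset (Fin n)),
        (∀ e ∈ H, e.card = r) ∧ LinearHypergraph H ∧ ¬ IsBerge F H ∧
        c * (n : ℝ) ^ 2 ≤ (H.card : ℝ)) ∧
      c * (n : ℝ) ^ 2 ≤ (exrL r n F : ℝ) := by
  classical
  refine ⟨1 / (2 * (r:ℝ)) ^ 2, by positivity, ?_⟩
  rw [eventually_atTop]
  refine ⟨2 * r * r, fun n hn => ?_⟩
  have hrpos : 0 < r := by omega
  set k := n / (2 * r) with hkdef
  have hk : r ≤ k := (Nat.le_div_iff_mul_le (by omega)).2 (by nlinarith)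
  obtain ⟨p, hp, hkp, hp2k⟩ := Nat.exists_prime_lt_and_le_two_mul k (by omega)
  haveI : NeZero p := ⟨hp.pos.ne'⟩
  have hrlt : r < p := lt_of_le_of_lt hk hkp
  have hrp : r * p ≤ n := by
    calc r * p ≤ r * (2 * k) := Nat.mul_le_mul_left _ hp2k
    _ = (n / (2 * r)) * (2 * r) := by rw [hkdef]; ring
    _ ≤ n := Nat.div_mul_le_self n (2 * r)
  set H := Stmt3Aux.hyp r p n hrp with hHdef
  have hcard : H.card = p * p := Stmt3Aux.card_hyp hrp hr2
  have huni : ∀ e ∈ H, e.card = r := Stmt3Aux.uniform_hyp hrp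
  have hlin : LinearHypergraph H := Stmt3Aux.linear_hyp hp hrp hrlt
  have hnb : ¬ IsBerge F H := by
    intro hB
    have hcol : F.Colorable r :=
      Stmt3Aux.berge_colorable hB (Stmt3Aux.colorable_shadow hrp (by omega))
    exact absurd hr (not_lt.2 hcol.chromaticNumber_le)
  have hnlt : (n : ℝ) < 2 * r * p := by
    have h5 : n % (2 * r) < 2 * r := Nat.mod_lt _ (by omega)
    have h6 : (2 * r) * k + n % (2 * r) = n := Nat.div_add_mod n (2 * r)
    have h7 : n < (2 * r) * (k + 1) := by
      have : (2 * r) * (k + 1) = (2 * r) * k + 2 * r := by ring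
      omega
    have h8 : (2 * r) * (k + 1) ≤ (2 * r) * p := Nat.mul_le_mul_left _ (by omega)
    have h9 : n < 2 * r * p := lt_of_lt_of_le h7 h8
    exact_mod_cast h9
  have hineq : 1 / (2 * (r:ℝ)) ^ 2 * (n : ℝ) ^ 2 ≤ ((p * p : ℕ) : ℝ) := by
    have hr0 : (0:ℝ) < 2 * (r:ℝ) := by positivity
    have hn0 : (0:ℝ) ≤ (n : ℝ) := Nat.cast_nonneg n
    have hsq : (n : ℝ) ^ 2 ≤ (2 * (r:ℝ) * p) ^ 2 := by nlinarith
    have : 1 / (2 * (r:ℝ)) ^ 2 * (2 * (r:ℝ) * p) ^ 2 = (p : ℝ) * p := by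
      field_simp
    push_cast
    calc 1 / (2 * (r:ℝ)) ^ 2 * (n : ℝ) ^ 2
        ≤ 1 / (2 * (r:ℝ)) ^ 2 * (2 * (r:ℝ) * p) ^ 2 :=
          mul_le_mul_of_nonneg_left hsq (by positivity)
      _ = (p : ℝ) * p := this
  have hsup : p * p ≤ exrL r n F := by
    unfold exrL
    apply le_csSup
    · refine ⟨Fintype.card (Finset (Fin n)), ?_⟩
      rintro m ⟨H', -, -, -, rfl⟩
      exact Finset.card_le_univ H'
    · exact ⟨H, huni, hlin, hnb, hcard⟩
  have hsupR : ((p * p : ℕ) : ℝ) ≤ (exrL r n F : ℝ) := Nat.cast_le.2 hsup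
  refine ⟨⟨H, huni, hlin, hnb, ?_⟩, le_trans hineq hsupR⟩
  rw [hcard]
  exact_mod_cast hineq
end

section
/- The uniformity threshold of the triangle is 5. That is: (a) for every integer r ≥ 5, ex_r(n,K_3) = o(n^2) as n → ∞; and (b) for every integer r with 2 ≤ r ≤ 4, there exists a constant c > 0 such that for all sufficiently large n there is an r-uniform hypergraph on n vertices containing no Berge-K_3 with at least c·n^2 hyperedges. -/
open Filter

section aux
open Finset SimpleGraph


lemma sym2_fin3_enum : ∀ a : Sym2 (Fin 3), a ∈ (⊤ : SimpleGraph (Fin 3)).edgeSet →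
    a = s(0,1) ∨ a = s(0,2) ∨ a = s(1,2) := by decide

-- construction lemma
lemma berge_mk {V : Type*} [DecidableEq V] {H : Finset (Finset V)} {x y z : V}
    {e1 e2 e3 : Finset V} (hxy : x ≠ y) (hxz : x ≠ z) (hyz : y ≠ z)
    (h1 : e1 ∈ H) (h2 : e2 ∈ H) (h3 : e3 ∈ H)
    (h12 : e1 ≠ e2) (h13 : e1 ≠ e3) (h23 : e2 ≠ e3)
    (hx1 : x ∈ e1) (hy1 : y ∈ e1) (hx2 : x ∈ e2) (hz2 : z ∈ e2)
    (hy3 : y ∈ e3) (hz3 : z ∈ e3) :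
    IsBerge (⊤ : SimpleGraph (Fin 3)) H := by
  refine ⟨![x, y, z], fun s => if s = s(0,1) then e1 else if s = s(0,2) then e2 else e3,
    ?_, ?_, ?_, ?_⟩
  · intro a b hab
    fin_cases a <;> fin_cases b <;> simp_all [Matrix.cons_val_zero, Matrix.cons_val_one] <;>
      first | rfl | (exact absurd hab (by assumption)) | (exact absurd hab.symm (by assumption))
  · intro a ha b hb hab
    have ha' := sym2_fin3_enum a ha
    have hb' := sym2_fin3_enum b hb
    rcases ha' with rfl | rfl | rfl <;> rcases hb' with rfl | rfl | rfl <;>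
      simp_all <;> first | rfl | (exfalso; revert hab; decide) | skip
  · intro e he
    have := sym2_fin3_enum e he
    rcases this with rfl | rfl | rfl <;> simp_all
  · intro u v huv
    have huv' : u ≠ v := huv.ne
    fin_cases u <;> fin_cases v <;> simp_all <;> decide

lemma berge_elim {V : Type*} {H : Finset (Finset V)}
    (h : IsBerge (⊤ : SimpleGraph (Fin 3)) H) :
    ∃ (x y z : V) (e1 e2 e3 : Finset V), x ≠ y ∧ x ≠ z ∧ y ≠ z ∧
      e1 ∈ H ∧ e2 ∈ H ∧ e3 ∈ H ∧ e1 ≠ e2 ∧ e1 ≠ e3 ∧ e2 ≠ e3 ∧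
      x ∈ e1 ∧ y ∈ e1 ∧ x ∈ e2 ∧ z ∈ e2 ∧ y ∈ e3 ∧ z ∈ e3 := by
  obtain ⟨ψ, φ, hψ, hinj, hmem, hadj⟩ := h
  have m1 : s(0,1) ∈ (⊤ : SimpleGraph (Fin 3)).edgeSet := by decide
  have m2 : s(0,2) ∈ (⊤ : SimpleGraph (Fin 3)).edgeSet := by decide
  have m3 : s(1,2) ∈ (⊤ : SimpleGraph (Fin 3)).edgeSet := by decide
  have a01 : (⊤ : SimpleGraph (Fin 3)).Adj 0 1 := by decide
  have a02 : (⊤ : SimpleGraph (Fin 3)).Adj 0 2 := by decide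
  have a12 : (⊤ : SimpleGraph (Fin 3)).Adj 1 2 := by decide
  refine ⟨ψ 0, ψ 1, ψ 2, φ s(0,1), φ s(0,2), φ s(1,2), ?_, ?_, ?_,
    hmem _ m1, hmem _ m2, hmem _ m3, ?_, ?_, ?_,
    (hadj a01).1, (hadj a01).2, (hadj a02).1, (hadj a02).2, (hadj a12).1, (hadj a12).2⟩
  · exact fun h => absurd (hψ h) (by decide)
  · exact fun h => absurd (hψ h) (by decide)
  · exact fun h => absurd (hψ h) (by decide)
  · exact fun h => absurd (hinj m1 m2 h) (by decide)
  · exact fun h => absurd (hinj m1 m3 h) (by decide)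
  · exact fun h => absurd (hinj m2 m3 h) (by decide)

section grid
variable {V : Type*} [DecidableEq V] (P Q : ℕ → Finset V)
  (hPd : ∀ i j v, v ∈ P i → v ∈ P j → i = j)
  (hQd : ∀ i j v, v ∈ Q i → v ∈ Q j → i = j)
  (hPQ : ∀ i j v, v ∈ P i → v ∈ Q j → False)

include hPQ in
-- membership decomposition
lemma memP {a b : ℕ} {v : V} (hv : v ∈ P a ∪ Q b) (hA : ∃ i, v ∈ P i) : v ∈ P a := by
  obtain ⟨i, hi⟩ := hA
  rcases Finset.mem_union.1 hv with h | h
  · exact h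
  · exact absurd (hPQ i b v hi h) (fun h => h)

include hPQ in
lemma memQ {a b : ℕ} {v : V} (hv : v ∈ P a ∪ Q b) (hB : ∃ j, v ∈ Q j) : v ∈ Q b := by
  obtain ⟨j, hj⟩ := hB
  rcases Finset.mem_union.1 hv with h | h
  · exact absurd (hPQ a j v h hj) (fun h => h)
  · exact h

include hPd hQd hPQ in
/-- helper: two vertices on the A side, one on the B side -/
lemma grid_aux {u v w : V} {euv euw evw : Finset V}
    (hne : euw ≠ evw)
    (ruv : ∃ a b, euv = P a ∪ Q b) (ruw : ∃ a b, euw = P a ∪ Q b)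
    (rvw : ∃ a b, evw = P a ∪ Q b)
    (hu1 : u ∈ euv) (hv1 : v ∈ euv) (hu2 : u ∈ euw) (hw2 : w ∈ euw)
    (hv3 : v ∈ evw) (hw3 : w ∈ evw)
    (hAu : ∃ i, u ∈ P i) (hAv : ∃ i, v ∈ P i) (hBw : ∃ j, w ∈ Q j) : False := by
  obtain ⟨a, b, rfl⟩ := ruv
  obtain ⟨c, d, rfl⟩ := ruw
  obtain ⟨g, f, rfl⟩ := rvw
  have hu1' := memP P Q hPQ hu1 hAu
  have hv1' := memP P Q hPQ hv1 hAv
  have hu2' := memP P Q hPQ hu2 hAu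
  have hv3' := memP P Q hPQ hv3 hAv
  have hw2' := memQ P Q hPQ hw2 hBw
  have hw3' := memQ P Q hPQ hw3 hBw
  have hac : a = c := hPd a c u hu1' hu2'
  have hag : a = g := hPd a g v hv1' hv3'
  have hdf : d = f := hQd d f w hw2' hw3'
  subst hac hag hdf
  exact hne rfl

include hPd hPQ in
/-- helper: all three on the A side -/
lemma grid_aux3 (hPc : ∀ i, (P i).card ≤ 2) {u v w : V} {euv euw evw : Finset V}
    (huv : u ≠ v) (huw : u ≠ w) (hvw : v ≠ w)
    (ruv : ∃ a b, euv = P a ∪ Q b) (ruw : ∃ a b, euw = P a ∪ Q b)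
    (rvw : ∃ a b, evw = P a ∪ Q b)
    (hu1 : u ∈ euv) (hv1 : v ∈ euv) (hu2 : u ∈ euw) (hw2 : w ∈ euw)
    (hv3 : v ∈ evw) (hw3 : w ∈ evw)
    (hAu : ∃ i, u ∈ P i) (hAv : ∃ i, v ∈ P i) (hAw : ∃ j, w ∈ P j) : False := by
  obtain ⟨a, b, rfl⟩ := ruv
  obtain ⟨c, d, rfl⟩ := ruw
  obtain ⟨g, f, rfl⟩ := rvw
  have hu1' := memP P Q hPQ hu1 hAu
  have hv1' := memP P Q hPQ hv1 hAv
  have hu2' := memP P Q hPQ hu2 hAu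
  have hw2' := memP P Q hPQ hw2 hAw
  have hac : a = c := hPd a c u hu1' hu2'
  subst hac
  have h3 : ({u, v, w} : Finset V) ⊆ P a := by
    intro x hx
    simp only [Finset.mem_insert, Finset.mem_singleton] at hx
    rcases hx with rfl | rfl | rfl
    · exact hu1'
    · exact hv1'
    · exact hw2'
  have hcard : ({u, v, w} : Finset V).card = 3 := by
    rw [Finset.card_insert_of_notMem (by simp [huv, huw]),
      Finset.card_insert_of_notMem (by simp [hvw]), Finset.card_singleton]
  have := Finset.card_le_card h3
  rw [hcard] at this
  have := hPc a
  omega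

end grid

lemma grid_free {V : Type*} [DecidableEq V] (P Q : ℕ → Finset V)
    (hPd : ∀ i j v, v ∈ P i → v ∈ P j → i = j)
    (hQd : ∀ i j v, v ∈ Q i → v ∈ Q j → i = j)
    (hPQ : ∀ i j v, v ∈ P i → v ∈ Q j → False)
    (hPc : ∀ i, (P i).card ≤ 2) (hQc : ∀ j, (Q j).card ≤ 2)
    (H : Finset (Finset V)) (hH : ∀ e ∈ H, ∃ i j, e = P i ∪ Q j) :
    ¬ IsBerge (⊤ : SimpleGraph (Fin 3)) H := by
  intro hb
  obtain ⟨x, y, z, e1, e2, e3, hxy, hxz, hyz, he1, he2, he3, h12, h13, h23,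
    hx1, hy1, hx2, hz2, hy3, hz3⟩ := berge_elim hb
  -- swapped versions of the hypotheses
  have hQP : ∀ i j v, v ∈ Q i → v ∈ P j → False := fun i j v hq hp => hPQ j i v hp hq
  have r1 := hH e1 he1
  have r2 := hH e2 he2
  have r3 := hH e3 he3
  have r1' : ∃ a b, e1 = Q a ∪ P b := by
    obtain ⟨i, j, rfl⟩ := r1; exact ⟨j, i, Finset.union_comm _ _⟩
  have r2' : ∃ a b, e2 = Q a ∪ P b := by
    obtain ⟨i, j, rfl⟩ := r2; exact ⟨j, i, Finset.union_comm _ _⟩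
  have r3' : ∃ a b, e3 = Q a ∪ P b := by
    obtain ⟨i, j, rfl⟩ := r3; exact ⟨j, i, Finset.union_comm _ _⟩
  -- sides
  have sideOf : ∀ v ∈ e1 ∪ e2 ∪ e3, (∃ i, v ∈ P i) ∨ (∃ j, v ∈ Q j) := by
    intro v hv
    simp only [Finset.mem_union] at hv
    have : v ∈ e1 ∨ v ∈ e2 ∨ v ∈ e3 := by tauto
    rcases this with h | h | h
    · obtain ⟨i, j, rfl⟩ := r1
      rcases Finset.mem_union.1 h with h | h
      exacts [Or.inl ⟨i, h⟩, Or.inr ⟨j, h⟩]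
    · obtain ⟨i, j, rfl⟩ := r2
      rcases Finset.mem_union.1 h with h | h
      exacts [Or.inl ⟨i, h⟩, Or.inr ⟨j, h⟩]
    · obtain ⟨i, j, rfl⟩ := r3
      rcases Finset.mem_union.1 h with h | h
      exacts [Or.inl ⟨i, h⟩, Or.inr ⟨j, h⟩]
  have sx := sideOf x (by simp [hx1])
  have sy := sideOf y (by simp [hy1])
  have sz := sideOf z (by simp [hz2])
  rcases sx with sx | sx <;> rcases sy with sy | sy <;> rcases sz with sz | sz
  · exact grid_aux3 P Q hPd hPQ hPc hxy hxz hyz r1 r2 r3 hx1 hy1 hx2 hz2 hy3 hz3 sx sy sz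
  · exact grid_aux P Q hPd hQd hPQ h23 r1 r2 r3 hx1 hy1 hx2 hz2 hy3 hz3 sx sy sz
  · exact grid_aux P Q hPd hQd hPQ h13 r2 r1 r3 hx2 hz2 hx1 hy1 hz3 hy3 sx sz sy
  · exact grid_aux Q P hQd hPd hQP h12 r3' r1' r2' hy3 hz3 hy1 hx1 hz2 hx2 sy sz sx
  · exact grid_aux P Q hPd hQd hPQ h12 r3 r1 r2 hy3 hz3 hy1 hx1 hz2 hx2 sy sz sx
  · exact grid_aux Q P hQd hPd hQP h13 r2' r1' r3' hx2 hz2 hx1 hy1 hz3 hy3 sx sz sy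
  · exact grid_aux Q P hQd hPd hQP h23 r1' r2' r3' hx1 hy1 hx2 hz2 hy3 hz3 sx sy sz
  · exact grid_aux3 Q P hQd hQP hQc hxy hxz hyz r1' r2' r3' hx1 hy1 hx2 hz2 hy3 hz3 sx sy sz

def blk (n a k : ℕ) : Finset (Fin n) := univ.filter (fun v => a ≤ v.1 ∧ v.1 < a + k)

lemma mem_blk {n a k : ℕ} {v : Fin n} : v ∈ blk n a k ↔ a ≤ v.1 ∧ v.1 < a + k := by
  simp [blk]

lemma blk_card {n a k : ℕ} (h : a + k ≤ n) : (blk n a k).card = k := by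
  have : blk n a k = (Finset.Ico a (a+k)).attachFin
      (fun m hm => lt_of_lt_of_le (Finset.mem_Ico.1 hm).2 h) := by
    ext v; simp [mem_blk, Finset.mem_attachFin, Finset.mem_Ico]
  rw [this, Finset.card_attachFin, Nat.card_Ico]
  omega

def Pb (n m s : ℕ) (i : ℕ) : Finset (Fin n) := if i < m then blk n (2*i) s else ∅
def Qb (n m t : ℕ) (j : ℕ) : Finset (Fin n) := if j < m then blk n (2*m + 2*j) t else ∅

lemma Pb_disj {n m s : ℕ} (hs : s ≤ 2) : ∀ i j (v : Fin n), v ∈ Pb n m s i → v ∈ Pb n m s j → i = j := by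
  intro i j v hi hj
  unfold Pb at hi hj
  split at hi; swap; · simp at hi
  split at hj; swap; · simp at hj
  rw [mem_blk] at hi hj
  omega

lemma Qb_disj {n m t : ℕ} (ht : t ≤ 2) : ∀ i j (v : Fin n), v ∈ Qb n m t i → v ∈ Qb n m t j → i = j := by
  intro i j v hi hj
  unfold Qb at hi hj
  split at hi; swap; · simp at hi
  split at hj; swap; · simp at hj
  rw [mem_blk] at hi hj
  omega

lemma PQb_disj {n m s t : ℕ} (hs : s ≤ 2) : ∀ i j (v : Fin n), v ∈ Pb n m s i → v ∈ Qb n m t j → False := by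
  intro i j v hi hj
  unfold Pb at hi; unfold Qb at hj
  split at hi; swap; · simp at hi
  split at hj; swap; · simp at hj
  rw [mem_blk] at hi hj
  omega

lemma blk_card_le {n a k : ℕ} : (blk n a k).card ≤ k := by
  have h := Finset.card_le_card_of_injOn (s := blk n a k) (t := Finset.Ico a (a+k)) (fun v : Fin n => v.1)
    (fun v hv => by rw [Finset.mem_coe, mem_blk] at hv; exact Finset.mem_Ico.2 hv)
    (fun a _ b _ h => Fin.ext h)
  rwa [Nat.card_Ico, Nat.add_sub_cancel_left] at h

lemma Pb_card_le {n m s : ℕ} (hs : s ≤ 2) (i : ℕ) : (Pb n m s i).card ≤ 2 := by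
  unfold Pb; split
  · exact le_trans blk_card_le hs
  · simp

lemma Qb_card_le {n m t : ℕ} (ht : t ≤ 2) (j : ℕ) : (Qb n m t j).card ≤ 2 := by
  unfold Qb; split
  · exact le_trans blk_card_le ht
  · simp


def Hgrid (n m s t : ℕ) : Finset (Finset (Fin n)) :=
  ((range m) ×ˢ (range m)).image (fun p => Pb n m s p.1 ∪ Qb n m t p.2)

lemma Hgrid_mem {n m s t : ℕ} {e : Finset (Fin n)} (he : e ∈ Hgrid n m s t) :
    ∃ i j, i < m ∧ j < m ∧ e = Pb n m s i ∪ Qb n m t j := by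
  obtain ⟨⟨i, j⟩, hij, rfl⟩ := Finset.mem_image.1 he
  rw [Finset.mem_product, Finset.mem_range, Finset.mem_range] at hij
  exact ⟨i, j, hij.1, hij.2, rfl⟩

lemma Hgrid_uniform {n m s t : ℕ} (hs1 : 1 ≤ s) (hs2 : s ≤ 2) (ht1 : 1 ≤ t) (ht2 : t ≤ 2)
    (hn : 4 * m ≤ n) {e : Finset (Fin n)} (he : e ∈ Hgrid n m s t) : e.card = s + t := by
  obtain ⟨i, j, hi, hj, rfl⟩ := Hgrid_mem he
  have hdisj : Disjoint (Pb n m s i) (Qb n m t j) := by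
    rw [Finset.disjoint_left]
    exact fun v hv hv' => PQb_disj hs2 i j v hv hv'
  rw [Finset.card_union_of_disjoint hdisj]
  have h1 : (Pb n m s i).card = s := by
    unfold Pb; rw [if_pos hi]; exact blk_card (by omega)
  have h2 : (Qb n m t j).card = t := by
    unfold Qb; rw [if_pos hj]; exact blk_card (by omega)
  omega

lemma Hgrid_card {n m s t : ℕ} (hs1 : 1 ≤ s) (hs2 : s ≤ 2) (ht1 : 1 ≤ t) (ht2 : t ≤ 2)
    (hn : 4 * m ≤ n) : (Hgrid n m s t).card = m * m := by
  rw [Hgrid, Finset.card_image_of_injOn, Finset.card_product, Finset.card_range]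
  rintro ⟨i, j⟩ hij ⟨i', j'⟩ hij' heq
  rw [Finset.mem_coe, Finset.mem_product, Finset.mem_range, Finset.mem_range] at hij hij'
  obtain ⟨hi, hj⟩ := hij
  obtain ⟨hi', hj'⟩ := hij'
  simp only at heq
  have hvP : (⟨2*i, by omega⟩ : Fin n) ∈ Pb n m s i := by
    unfold Pb; rw [if_pos hi, mem_blk]; simp; omega
  have hvQ : (⟨2*m + 2*j, by omega⟩ : Fin n) ∈ Qb n m t j := by
    unfold Qb; rw [if_pos hj, mem_blk]; simp; omega
  have h1 : (⟨2*i, by omega⟩ : Fin n) ∈ Pb n m s i' ∪ Qb n m t j' := by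
    rw [← heq]; exact Finset.mem_union_left _ hvP
  have h2 : (⟨2*m + 2*j, by omega⟩ : Fin n) ∈ Pb n m s i' ∪ Qb n m t j' := by
    rw [← heq]; exact Finset.mem_union_right _ hvQ
  have hii : i = i' := by
    rcases Finset.mem_union.1 h1 with h | h
    · exact Pb_disj hs2 i i' _ hvP h
    · exact absurd (PQb_disj hs2 i j' _ hvP h) (fun h => h)
  have hjj : j = j' := by
    rcases Finset.mem_union.1 h2 with h | h
    · exact absurd (PQb_disj hs2 i' j _ h hvQ) (fun h => h)
    · exact Qb_disj (by omega) j j' _ hvQ h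
  simp [hii, hjj]


lemma partB : ∀ r : ℕ, 2 ≤ r → r ≤ 4 → ∃ c : ℝ, 0 < c ∧ ∀ᶠ n : ℕ in atTop,
    ∃ H : Finset (Finset (Fin n)),
      (∀ e ∈ H, e.card = r) ∧ ¬ IsBerge (⊤ : SimpleGraph (Fin 3)) H ∧
      c * (n : ℝ) ^ 2 ≤ (H.card : ℝ) := by
  intro r hr2 hr4
  refine ⟨1/64, by norm_num, ?_⟩
  rw [eventually_atTop]
  refine ⟨8, fun n hn => ?_⟩
  set s := r / 2 with hs
  set t := r - r / 2 with ht
  set m := n / 4 with hm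
  have hs1 : 1 ≤ s := by omega
  have hs2 : s ≤ 2 := by omega
  have ht1 : 1 ≤ t := by omega
  have ht2 : t ≤ 2 := by omega
  have hst : s + t = r := by omega
  have h4m : 4 * m ≤ n := by omega
  have hn8m : n ≤ 8 * m := by omega
  refine ⟨Hgrid n m s t, fun e he => by rw [Hgrid_uniform hs1 hs2 ht1 ht2 h4m he, hst], ?_, ?_⟩
  · refine grid_free (Pb n m s) (Qb n m t) (Pb_disj hs2) (Qb_disj ht2) (PQb_disj hs2)
      (Pb_card_le hs2) (Qb_card_le ht2) _ (fun e he => ?_)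
    obtain ⟨i, j, _, _, rfl⟩ := Hgrid_mem he
    exact ⟨i, j, rfl⟩
  · rw [Hgrid_card hs1 hs2 ht1 ht2 h4m]
    have h1 : (n : ℝ) ≤ 8 * m := by exact_mod_cast hn8m
    have h2 : (0:ℝ) ≤ (n:ℝ) := by positivity
    push_cast
    nlinarith

lemma five_distinct {V : Type*} [DecidableEq V] {e : Finset V} (h : 5 ≤ e.card) :
    ∃ a b c d g, a ∈ e ∧ b ∈ e ∧ c ∈ e ∧ d ∈ e ∧ g ∈ e ∧
      a ≠ b ∧ a ≠ c ∧ a ≠ d ∧ a ≠ g ∧ b ≠ c ∧ b ≠ d ∧ b ≠ g ∧ c ≠ d ∧ c ≠ g ∧ d ≠ g := by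
  obtain ⟨a, ha⟩ := Finset.card_pos.1 (by omega : 0 < e.card)
  have h2 : 4 ≤ (e.erase a).card := by rw [Finset.card_erase_of_mem ha]; omega
  obtain ⟨b, hb⟩ := Finset.card_pos.1 (by omega : 0 < (e.erase a).card)
  have h3 : 3 ≤ ((e.erase a).erase b).card := by rw [Finset.card_erase_of_mem hb]; omega
  obtain ⟨c, hc⟩ := Finset.card_pos.1 (by omega : 0 < ((e.erase a).erase b).card)
  have h4 : 2 ≤ (((e.erase a).erase b).erase c).card := by
    rw [Finset.card_erase_of_mem hc]; omega
  obtain ⟨d, hd⟩ := Finset.card_pos.1 (by omega : 0 < (((e.erase a).erase b).erase c).card)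
  have h5 : 1 ≤ ((((e.erase a).erase b).erase c).erase d).card := by
    rw [Finset.card_erase_of_mem hd]; omega
  obtain ⟨g, hg⟩ := Finset.card_pos.1 (by omega : 0 < ((((e.erase a).erase b).erase c).erase d).card)
  simp only [Finset.mem_erase] at hb hc hd hg
  refine ⟨a, b, c, d, g, ha, hb.2, hc.2.2, hd.2.2.2, hg.2.2.2.2,
    ?_, ?_, ?_, ?_, ?_, ?_, ?_, ?_, ?_, ?_⟩ <;> (intro h; subst h) <;> tauto

section main
variable {V : Type*} [DecidableEq V] {H : Finset (Finset V)} {r : ℕ}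

lemma exists_good_triple (hr : 5 ≤ r) (huni : ∀ f ∈ H, f.card = r)
    (hfree : ¬ IsBerge (⊤ : SimpleGraph (Fin 3)) H) {e : Finset V} (he : e ∈ H) :
    ∃ x y z f, x ∈ e ∧ y ∈ e ∧ z ∈ e ∧ x ≠ y ∧ x ≠ z ∧ y ≠ z ∧
      ∀ g ∈ H, ((x ∈ g ∧ y ∈ g) ∨ (x ∈ g ∧ z ∈ g) ∨ (y ∈ g ∧ z ∈ g)) → g = e ∨ g = f := by
  classical
  -- the "multi-covered" relation inside e
  set Rel : V → V → Prop :=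
    fun u v => u ≠ v ∧ u ∈ e ∧ v ∈ e ∧ ∃ g ∈ H, g ≠ e ∧ u ∈ g ∧ v ∈ g with hRel
  have relSymm : ∀ {u v}, Rel u v → Rel v u := by
    rintro u v ⟨h1, h2, h3, g, hg, hgn, hug, hvg⟩
    exact ⟨h1.symm, h3, h2, g, hg, hgn, hvg, hug⟩
  -- no Berge triangle, in handy form
  have noTri : ∀ (x y z : V) (e1 e2 e3 : Finset V), x ≠ y → x ≠ z → y ≠ z →
      e1 ∈ H → e2 ∈ H → e3 ∈ H → e1 ≠ e2 → e1 ≠ e3 → e2 ≠ e3 →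
      x ∈ e1 → y ∈ e1 → x ∈ e2 → z ∈ e2 → y ∈ e3 → z ∈ e3 → False := by
    intro x y z e1 e2 e3 hxy hxz hyz h1 h2 h3 h12 h13 h23 hx1 hy1 hx2 hz2 hy3 hz3
    exact hfree (berge_mk hxy hxz hyz h1 h2 h3 h12 h13 h23 hx1 hy1 hx2 hz2 hy3 hz3)
  -- key: witnesses of two pair-paths agree
  have witness_eq : ∀ {u v w : V} {g h : Finset V}, u ∈ e → v ∈ e → w ∈ e →
      u ≠ v → v ≠ w → u ≠ w → g ∈ H → g ≠ e → u ∈ g → v ∈ g →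
      h ∈ H → h ≠ e → v ∈ h → w ∈ h → g = h := by
    intro u v w g h hu hv hw huv hvw huw hg hgn hug hvg hh hhn hvh hwh
    by_contra hne
    exact noTri u w v e g h huw huv (fun hh' => hvw hh'.symm) he hg hh
      (fun h' => hgn h'.symm) (fun h' => hhn h'.symm) hne hu hw hug hvg hwh hvh
  by_cases h1 : ∃ x y z, x ∈ e ∧ y ∈ e ∧ z ∈ e ∧ x ≠ y ∧ x ≠ z ∧ y ≠ z ∧
      ¬ Rel x y ∧ ¬ Rel x z ∧ ¬ Rel y z
  · obtain ⟨x, y, z, hx, hy, hz, hxy, hxz, hyz, nxy, nxz, nyz⟩ := h1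
    refine ⟨x, y, z, e, hx, hy, hz, hxy, hxz, hyz, fun g hg hp => ?_⟩
    by_contra hc
    push_neg at hc
    obtain ⟨hgn, -⟩ := hc
    rcases hp with ⟨h1, h2⟩ | ⟨h1, h2⟩ | ⟨h1, h2⟩
    · exact nxy ⟨hxy, hx, hy, g, hg, hgn, h1, h2⟩
    · exact nxz ⟨hxz, hx, hz, g, hg, hgn, h1, h2⟩
    · exact nyz ⟨hyz, hy, hz, g, hg, hgn, h1, h2⟩
  · have NoIndep : ∀ x y z, x ∈ e → y ∈ e → z ∈ e → x ≠ y → x ≠ z → y ≠ z →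
        Rel x y ∨ Rel x z ∨ Rel y z := by
      intro x y z hx hy hz hxy hxz hyz
      by_contra hc
      push_neg at hc
      exact h1 ⟨x, y, z, hx, hy, hz, hxy, hxz, hyz, hc.1, hc.2.1, hc.2.2⟩
    by_cases h2 : ∃ x y z, x ≠ z ∧ Rel x y ∧ Rel y z
    · obtain ⟨x, y, z, hxz, rxy, ryz⟩ := h2
      obtain ⟨hxy, hx, hy, f, hf, hfn, hxf, hyf⟩ := rxy
      obtain ⟨hyz, -, hz, h, hh, hhn, hyh, hzh⟩ := ryz
      refine ⟨x, y, z, f, hx, hy, hz, hxy, hxz, hyz, fun g hg hp => ?_⟩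
      by_cases hge : g = e
      · exact Or.inl hge
      right
      have hfh : f = h := witness_eq hx hy hz hxy hyz hxz hf hfn hxf hyf hh hhn hyh hzh
      rcases hp with ⟨hp1, hp2⟩ | ⟨hp1, hp2⟩ | ⟨hp1, hp2⟩
      · -- g contains x,y : compare with h on pairs (x,y),(y,z)
        exact (witness_eq hx hy hz hxy hyz hxz hg hge hp1 hp2 hh hhn hyh hzh).trans hfh.symm
      · -- g contains x,z : compare f on (y,x) with g on (x,z)
        exact (witness_eq hy hx hz (fun h' => hxy h'.symm) hxz hyz hf hfn hyf hxf
          hg hge hp1 hp2).symm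
      · -- g contains y,z : compare f on (x,y) with g on (y,z)
        exact (witness_eq hx hy hz hxy hyz hxz hf hfn hxf hyf hg hge hp1 hp2).symm
    · -- matching case: derive a contradiction using 5 distinct vertices
      exfalso
      push_neg at h2
      have Match : ∀ {x y z}, Rel x y → Rel y z → x = z := by
        intro x y z rxy ryz
        by_contra hne
        exact h2 x y z hne rxy ryz
      have L2 : ∀ {u1 v1 u2 v2 t : V}, Rel u1 v1 → Rel u2 v2 → t ∈ e →
          u1 ≠ u2 → u1 ≠ t → u2 ≠ t → v1 ≠ t → v2 ≠ t → v1 ≠ u2 → False := by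
        intro u1 v1 u2 v2 t r1 r2 ht h12 h1t h2t hv1t hv2t hv1u2
        rcases NoIndep u1 u2 t r1.2.1 r2.2.1 ht h12 h1t h2t with hR | hR | hR
        · exact hv1u2 (Match (relSymm r1) hR)
        · exact hv1t (Match (relSymm r1) hR)
        · exact hv2t (Match (relSymm r2) hR)
      obtain ⟨a, b, c, d, g5, ha, hb, hc, hd, hg5, hab, hac, had, hag, hbc, hbd, hbg,
        hcd, hcg, hdg⟩ := five_distinct (by rw [huni e he]; exact hr)
      have L1 : ∀ {p q r1 r2 r3 : V}, Rel p q → r1 ∈ e → r2 ∈ e → r3 ∈ e →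
          r1 ≠ r2 → r1 ≠ r3 → r2 ≠ r3 →
          p ≠ r1 → p ≠ r2 → p ≠ r3 → q ≠ r1 → q ≠ r2 → q ≠ r3 → False := by
        intro p q r1 r2 r3 rpq h1 h2 h3 h12 h13 h23 hp1 hp2 hp3 hq1 hq2 hq3
        rcases NoIndep r1 r2 r3 h1 h2 h3 h12 h13 h23 with hR | hR | hR
        · exact L2 rpq hR h3 hp1 hp3 h13 hq3 h23 hq1
        · exact L2 rpq hR h2 hp1 hp2 h12 hq2 (fun h => h23 h.symm) hq1
        · exact L2 rpq hR h1 hp2 hp1 (fun h => h12 h.symm) hq1 (fun h => h13 h.symm) hq2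
      rcases NoIndep a b c ha hb hc hab hac hbc with hR | hR | hR
      · exact L1 hR hc hd hg5 hcd hcg hdg hac had hag hbc hbd hbg
      · exact L1 hR hb hd hg5 hbd hbg hdg hab had hag (fun h => hbc h.symm) hcd hcg
      · exact L1 hR ha hd hg5 had hag hdg (fun h => hab h.symm) hbd hbg
          (fun h => hac h.symm) hcd hcg

end main

set_option maxHeartbeats 1000000 in
lemma partA_bound {r : ℕ} (hr : 5 ≤ r) {ε : ℝ} (hε : 0 < ε) :
    ∃ N : ℕ, ∀ n, N ≤ n → ∀ H : Finset (Finset (Fin n)),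
      (∀ e ∈ H, e.card = r) → ¬ IsBerge (⊤ : SimpleGraph (Fin 3)) H →
      (H.card : ℝ) ≤ ε * (n : ℝ) ^ 2 := by
  classical
  set d : ℝ := min (ε/2) (1/4) with hd
  have hd0 : 0 < d := lt_min (by linarith) (by norm_num)
  have hd1 : d ≤ 1 := le_trans (min_le_right _ _) (by norm_num)
  have hdε : 2 * d ≤ ε := by
    have := min_le_left (ε/2) (1/4); linarith
  have htRB : 0 < triangleRemovalBound d := triangleRemovalBound_pos hd0
  set C : ℝ := (r.choose 3 : ℝ) with hC
  have hC0 : 0 ≤ C := by positivity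
  obtain ⟨N0, hN0⟩ : ∃ N0 : ℕ, 2 * C / triangleRemovalBound d < N0 := exists_nat_gt _
  refine ⟨max N0 1, fun n hn H huni hfree => ?_⟩
  have hn1 : 1 ≤ n := le_trans (le_max_right _ _) hn
  have hnN0 : 2 * C / triangleRemovalBound d < (n : ℝ) := by
    refine lt_of_lt_of_le hN0 ?_
    exact_mod_cast le_trans (le_max_left _ _) hn
  haveI : Nonempty (Fin n) := ⟨⟨0, by omega⟩⟩
  -- choose designated triples
  have hch : ∀ e : Finset (Fin n), ∃ (x y z : Fin n) (f : Finset (Fin n)), e ∈ H →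
      (x ∈ e ∧ y ∈ e ∧ z ∈ e ∧ x ≠ y ∧ x ≠ z ∧ y ≠ z ∧
        ∀ g ∈ H, ((x ∈ g ∧ y ∈ g) ∨ (x ∈ g ∧ z ∈ g) ∨ (y ∈ g ∧ z ∈ g)) → g = e ∨ g = f) := by
    intro e
    by_cases he : e ∈ H
    · obtain ⟨x, y, z, f, h1, h2, h3, h4, h5, h6, h7⟩ :=
        exists_good_triple hr huni hfree he
      exact ⟨x, y, z, f, fun _ => ⟨h1, h2, h3, h4, h5, h6, h7⟩⟩
    · exact ⟨Classical.arbitrary _, Classical.arbitrary _, Classical.arbitrary _,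
        e, fun h => absurd h he⟩
  choose X Y Z F hXYZ using hch
  set pairs : Finset (Fin n) → Finset (Sym2 (Fin n)) :=
    fun e => {s(X e, Y e), s(X e, Z e), s(Y e, Z e)} with hpairs
  set D : Finset (Sym2 (Fin n)) := H.biUnion pairs with hDdef
  set G : SimpleGraph (Fin n) := SimpleGraph.fromEdgeSet (D : Set (Sym2 (Fin n))) with hGdef
  haveI : DecidableRel G.Adj := Classical.decRel _
  have coordmem : ∀ e ∈ H, ∀ (a b : Fin n), s(a,b) ∈ pairs e → a ∈ e ∧ b ∈ e ∧ a ≠ b := by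
    intro e he a b hab
    obtain ⟨hx, hy, hz, hxy, hxz, hyz, -⟩ := hXYZ e he
    have hyx := hxy.symm; have hzx := hxz.symm; have hzy := hyz.symm
    simp only [hpairs, mem_insert, mem_singleton] at hab
    rcases hab with h | h | h <;> rw [Sym2.eq_iff] at h <;>
      rcases h with ⟨rfl, rfl⟩ | ⟨rfl, rfl⟩ <;> tauto
  have pair_bound : ∀ e ∈ H, ∀ g ∈ H, ∀ (a b : Fin n),
      s(a,b) ∈ pairs e → a ∈ g → b ∈ g → g = e ∨ g = F e := by
    intro e he g hg a b hab hag hbg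
    obtain ⟨hx, hy, hz, hxy, hxz, hyz, hp⟩ := hXYZ e he
    apply hp g hg
    simp only [hpairs, mem_insert, mem_singleton] at hab
    rcases hab with h | h | h <;> rw [Sym2.eq_iff] at h <;>
      rcases h with ⟨h1, h2⟩ | ⟨h1, h2⟩ <;> subst h1 <;> subst h2 <;> tauto
  have des_tri : ∀ e ∈ H, G.Adj (X e) (Y e) ∧ G.Adj (X e) (Z e) ∧ G.Adj (Y e) (Z e) := by
    intro e he
    obtain ⟨hx, hy, hz, hxy, hxz, hyz, -⟩ := hXYZ e he
    refine ⟨?_, ?_, ?_⟩ <;> rw [hGdef, SimpleGraph.fromEdgeSet_adj] <;>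
      refine ⟨Finset.mem_coe.2 (Finset.mem_biUnion.2 ⟨e, he, by simp [hpairs]⟩), by assumption⟩
  have noTri : ∀ (x y z : Fin n) (e1 e2 e3 : Finset (Fin n)), x ≠ y → x ≠ z → y ≠ z →
      e1 ∈ H → e2 ∈ H → e3 ∈ H → e1 ≠ e2 → e1 ≠ e3 → e2 ≠ e3 →
      x ∈ e1 → y ∈ e1 → x ∈ e2 → z ∈ e2 → y ∈ e3 → z ∈ e3 → False := by
    intro x y z e1 e2 e3 hxy hxz hyz h1 h2 h3 h12 h13 h23 hx1 hy1 hx2 hz2 hy3 hz3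
    exact hfree (berge_mk hxy hxz hyz h1 h2 h3 h12 h13 h23 hx1 hy1 hx2 hz2 hy3 hz3)
  have tri_in_edge : ∀ a b c : Fin n, G.Adj a b → G.Adj a c → G.Adj b c →
      ∃ e ∈ H, a ∈ e ∧ b ∈ e ∧ c ∈ e := by
    intro a b c hab hac hbc
    rw [hGdef, SimpleGraph.fromEdgeSet_adj] at hab hac hbc
    obtain ⟨e1, he1, hp1⟩ := Finset.mem_biUnion.1 (Finset.mem_coe.1 hab.1)
    obtain ⟨e2, he2, hp2⟩ := Finset.mem_biUnion.1 (Finset.mem_coe.1 hac.1)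
    obtain ⟨e3, he3, hp3⟩ := Finset.mem_biUnion.1 (Finset.mem_coe.1 hbc.1)
    have m1 := coordmem e1 he1 a b hp1
    have m2 := coordmem e2 he2 a c hp2
    have m3 := coordmem e3 he3 b c hp3
    by_cases h12 : e1 = e2
    · exact ⟨e1, he1, m1.1, m1.2.1, h12 ▸ m2.2.1⟩
    by_cases h13 : e1 = e3
    · exact ⟨e1, he1, m1.1, m1.2.1, h13 ▸ m3.2.1⟩
    by_cases h23 : e2 = e3
    · exact ⟨e2, he2, m2.1, h23 ▸ m3.1, m2.2.1⟩
    exact absurd (noTri a b c e1 e2 e3 hab.2 hac.2 hbc.2 he1 he2 he3 h12 h13 h23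
      m1.1 m1.2.1 m2.1 m2.2.1 m3.1 m3.2.1) not_false
  -- all triangles live inside hyperedges
  have tri_count : ((G.cliqueFinset 3).card : ℝ) ≤ (H.card : ℝ) * C := by
    have hsub : G.cliqueFinset 3 ⊆ H.biUnion (fun e => e.powersetCard 3) := by
      intro t ht
      rw [SimpleGraph.mem_cliqueFinset_iff, SimpleGraph.is3Clique_iff] at ht
      obtain ⟨a, b, c, hab, hac, hbc, rfl⟩ := ht
      obtain ⟨e, he, ha, hb, hc⟩ := tri_in_edge a b c hab hac hbc
      refine Finset.mem_biUnion.2 ⟨e, he, Finset.mem_powersetCard.2 ⟨?_, ?_⟩⟩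
      · intro x hx
        simp only [Finset.mem_insert, Finset.mem_singleton] at hx
        rcases hx with rfl | rfl | rfl <;> assumption
      · rw [Finset.card_insert_of_notMem (by simp [hab.ne, hac.ne]),
          Finset.card_insert_of_notMem (by simp [hbc.ne]), Finset.card_singleton]
    have h2 : (G.cliqueFinset 3).card ≤ H.card * r.choose 3 := by
      refine le_trans (Finset.card_le_card hsub)
        (le_trans Finset.card_biUnion_le (le_of_eq ?_))
      calc ∑ e ∈ H, (e.powersetCard 3).card = ∑ e ∈ H, r.choose 3 :=
              Finset.sum_congr rfl (fun e he => by
                rw [Finset.card_powersetCard, huni e he])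
        _ = H.card * r.choose 3 := by rw [Finset.sum_const, smul_eq_mul]
    calc ((G.cliqueFinset 3).card : ℝ) ≤ ((H.card * r.choose 3 : ℕ) : ℝ) := by exact_mod_cast h2
      _ = (H.card : ℝ) * C := by push_cast [hC]; ring
  -- fiber bound
  have fiber : ∀ p : Sym2 (Fin n), (H.filter (fun e => p ∈ pairs e)).card ≤ 2 := by
    intro p
    rcases (H.filter (fun e => p ∈ pairs e)).eq_empty_or_nonempty with h | ⟨e0, he0⟩
    · simp [h]
    rw [Finset.mem_filter] at he0
    obtain ⟨he0H, hp0⟩ := he0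
    have hsub : H.filter (fun e => p ∈ pairs e) ⊆ {e0, F e0} := by
      intro e' he'
      rw [Finset.mem_filter] at he'
      obtain ⟨he'H, hp'⟩ := he'
      have key : e' = e0 ∨ e' = F e0 := by
        simp only [hpairs, mem_insert, mem_singleton] at hp0
        rcases hp0 with h0 | h0 | h0 <;> subst h0 <;>
        · have hm := coordmem e' he'H _ _ hp'
          exact pair_bound e0 he0H e' he'H _ _ (by simp [hpairs]) hm.1 hm.2.1
      simp only [Finset.mem_insert, Finset.mem_singleton]
      exact key
    exact le_trans (Finset.card_le_card hsub)
      (le_trans (Finset.card_insert_le _ _) (by simp))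
  -- a priori bound : H.card ≤ n * (n+1)
  have apriori : (H.card : ℝ) ≤ 2 * (n : ℝ)^2 := by
    have himg : H.card ≤ 2 * (H.image (fun e => s(X e, Y e))).card := by
      refine Finset.card_le_mul_card_image _ 2 (fun b hb => ?_)
      refine le_trans (Finset.card_le_card ?_) (fiber b)
      intro x hx
      rw [Finset.mem_filter] at hx ⊢
      exact ⟨hx.1, by rw [← hx.2]; simp [hpairs]⟩
    have hcard : (H.image (fun e => s(X e, Y e))).card ≤ Fintype.card (Sym2 (Fin n)) := by
      rw [← Finset.card_univ]; exact Finset.card_le_univ _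
    have hsym : Fintype.card (Sym2 (Fin n)) = (n + 1).choose 2 := by
      rw [Sym2.card, Fintype.card_fin]
    have hnat : H.card ≤ 2 * ((n+1).choose 2) := by
      rw [← hsym]; omega
    have hc2 : (((n+1).choose 2 : ℕ) : ℝ) ≤ ((n:ℝ)+1) * (n:ℝ) / 2 := by
      rw [Nat.choose_two_right, Nat.add_sub_cancel]
      refine le_trans Nat.cast_div_le ?_
      push_cast
      apply le_of_eq; ring
    have hcast : (H.card : ℝ) ≤ 2 * (((n+1).choose 2 : ℕ) : ℝ) := by exact_mod_cast hnat
    have hn1' : (1:ℝ) ≤ (n:ℝ) := by exact_mod_cast hn1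
    nlinarith [hcast, hc2, hn1']
  by_cases hFar : G.FarFromTriangleFree d
  · exfalso
    have h1 := hFar.le_card_cliqueFinset
    rw [Fintype.card_fin] at h1
    have h2 : triangleRemovalBound d * (n:ℝ)^3 ≤ 2*(n:ℝ)^2 * C :=
      le_trans h1 (le_trans tri_count (by nlinarith [apriori, hC0]))
    have h3 : 2 * C < triangleRemovalBound d * n := by
      rw [div_lt_iff₀ htRB] at hnN0
      linarith [hnN0]
    have hn0 : (0:ℝ) < n := by exact_mod_cast hn1
    have h4 := mul_lt_mul_of_pos_right h3 (by positivity : (0:ℝ) < (n:ℝ)^2)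
    nlinarith [h2, h4]
  · unfold SimpleGraph.FarFromTriangleFree SimpleGraph.DeleteFar at hFar
    push_neg at hFar
    obtain ⟨s, hs_sub, hs_free, hs_card⟩ := hFar
    have hdel : ∀ e : Finset (Fin n), ∃ p : Sym2 (Fin n), e ∈ H → (p ∈ s ∧ p ∈ pairs e) := by
      intro e
      by_cases he : e ∈ H
      · obtain ⟨hx, hy, hz, hxy, hxz, hyz, -⟩ := hXYZ e he
        obtain ⟨t1, t2, t3⟩ := des_tri e he
        by_cases p1 : s(X e, Y e) ∈ s
        · exact ⟨_, fun _ => ⟨p1, by simp [hpairs]⟩⟩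
        by_cases p2 : s(X e, Z e) ∈ s
        · exact ⟨_, fun _ => ⟨p2, by simp [hpairs]⟩⟩
        by_cases p3 : s(Y e, Z e) ∈ s
        · exact ⟨_, fun _ => ⟨p3, by simp [hpairs]⟩⟩
        exfalso
        have hclique : (G.deleteEdges ↑s).IsNClique 3 {X e, Y e, Z e} := by
          rw [SimpleGraph.is3Clique_triple_iff]
          refine ⟨?_, ?_, ?_⟩ <;> rw [SimpleGraph.deleteEdges_adj]
          · exact ⟨t1, by simpa using p1⟩
          · exact ⟨t2, by simpa using p2⟩
          · exact ⟨t3, by simpa using p3⟩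
        exact hs_free _ hclique
      · exact ⟨s(Classical.arbitrary _, Classical.arbitrary _), fun h => absurd h he⟩
    choose c hc using hdel
    have himg2 : H.card ≤ 2 * (H.image c).card := by
      refine Finset.card_le_mul_card_image _ 2 (fun b hb => ?_)
      refine le_trans (Finset.card_le_card ?_) (fiber b)
      intro x hx
      rw [Finset.mem_filter] at hx ⊢
      exact ⟨hx.1, hx.2 ▸ (hc x hx.1).2⟩
    have himg3 : (H.image c) ⊆ s := by
      intro p hp
      obtain ⟨e, he, rfl⟩ := Finset.mem_image.1 hp
      exact (hc e he).1
    have hHs : H.card ≤ 2 * s.card := by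
      have := Finset.card_le_card himg3
      omega
    have hs_card' : (s.card : ℝ) < d * (n:ℝ)^2 := by
      rw [Fintype.card_fin] at hs_card
      push_cast at hs_card
      exact hs_card
    calc (H.card : ℝ) ≤ 2 * (s.card : ℝ) := by exact_mod_cast hHs
      _ ≤ 2 * (d * (n:ℝ)^2) := by linarith
      _ ≤ ε * (n:ℝ)^2 := by nlinarith [hdε, sq_nonneg (n:ℝ)]

lemma empty_not_berge {n : ℕ} : ¬ IsBerge (⊤ : SimpleGraph (Fin 3)) (∅ : Finset (Finset (Fin n))) := by
  rintro ⟨ψ, φ, -, -, hmem, -⟩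
  exact absurd (hmem s(0,1) (by decide)) (Finset.notMem_empty _)

end aux

/-- The uniformity threshold of the triangle is 5:
(a) for `r ≥ 5`, `ex_r(n,K_3) = o(n^2)`; (b) for `2 ≤ r ≤ 4`, there is `c > 0` such that
for all large `n` there is an `r`-uniform Berge-triangle-free hypergraph on `n` vertices
with at least `c n^2` hyperedges. -/
theorem stmt5 :
    (∀ r : ℕ, 5 ≤ r →
      Tendsto (fun n : ℕ => (exr r n (⊤ : SimpleGraph (Fin 3)) : ℝ) / (n : ℝ) ^ 2)
        atTop (nhds 0)) ∧
    (∀ r : ℕ, 2 ≤ r → r ≤ 4 → ∃ c : ℝ, 0 < c ∧ ∀ᶠ n : ℕ in atTop,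
      ∃ H : Finset (Finset (Fin n)),
        (∀ e ∈ H, e.card = r) ∧ ¬ IsBerge (⊤ : SimpleGraph (Fin 3)) H ∧
        c * (n : ℝ) ^ 2 ≤ (H.card : ℝ)) := by
  constructor
  · intro r hr
    rw [Metric.tendsto_atTop]
    intro ε hε
    obtain ⟨N, hN⟩ := partA_bound hr (half_pos hε)
    refine ⟨max N 1, fun n hn => ?_⟩
    have hn1 : 1 ≤ n := le_trans (le_max_right _ _) hn
    have hnN : N ≤ n := le_trans (le_max_left _ _) hn
    have hmem : exr r n (⊤ : SimpleGraph (Fin 3)) ∈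
        {m | ∃ H : Finset (Finset (Fin n)),
          (∀ e ∈ H, e.card = r) ∧ ¬ IsBerge (⊤ : SimpleGraph (Fin 3)) H ∧ H.card = m} := by
      apply Nat.sSup_mem
      · exact ⟨0, ∅, by simp, empty_not_berge, by simp⟩
      · refine ⟨2^n, fun m hm => ?_⟩
        obtain ⟨H, -, -, hcard⟩ := hm
        calc m = H.card := hcard.symm
          _ ≤ Fintype.card (Finset (Fin n)) := by
              rw [← Finset.card_univ]; exact Finset.card_le_univ _
          _ = 2^n := by rw [Fintype.card_finset, Fintype.card_fin]
    obtain ⟨H, huni, hfree, hcard⟩ := hmem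
    have hb := hN n hnN H huni hfree
    rw [hcard] at hb
    rw [Real.dist_eq, sub_zero, abs_of_nonneg (by positivity)]
    have hn0 : (0:ℝ) < (n:ℝ) := by exact_mod_cast hn1
    have hn2 : (0:ℝ) < (n:ℝ)^2 := pow_pos hn0 2
    rw [div_lt_iff₀ hn2]
    calc (exr r n (⊤ : SimpleGraph (Fin 3)) : ℝ) ≤ ε/2 * (n:ℝ)^2 := hb
      _ < ε * (n:ℝ)^2 := by nlinarith
  · exact partB
end

section
/- For any simple graph F with at least one edge and any integer r ≥ 3, and for every n: ex(n,K_r,F) ≤ ex_r(n,F) ≤ ex(n,K_r,F) + ex(n,F). -/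
open Filter

lemma greedy {n : ℕ} (H : Finset (Finset (Fin n))) :
    ∃ (E : Finset (Sym2 (Fin n))) (B : Finset (Finset (Fin n)))
      (c : Sym2 (Fin n) → Finset (Fin n)),
      (∀ s ∈ E, ¬ s.IsDiag) ∧
      Set.InjOn c ↑E ∧
      (∀ s ∈ E, c s ∈ H ∧ ∀ x ∈ s, x ∈ c s) ∧
      B ⊆ H ∧
      (∀ b ∈ B, ∀ u ∈ b, ∀ v ∈ b, u ≠ v → s(u,v) ∈ E) ∧
      H.card ≤ E.card + B.card := by
  classical
  induction H using Finset.induction_on with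
  | empty => exact ⟨∅, ∅, fun _ => ∅, by simp, by simp, by simp, by simp, by simp, by simp⟩
  | @insert a H ha ih =>
    obtain ⟨E, B, c, hnd, hinj, hmem, hBH, hBE, hcard⟩ := ih
    by_cases hc : ∃ u ∈ a, ∃ v ∈ a, u ≠ v ∧ s(u,v) ∉ E
    · obtain ⟨u, hu, v, hv, huv, hs⟩ := hc
      refine ⟨insert s(u,v) E, B, Function.update c s(u,v) a, ?_, ?_, ?_, ?_, ?_, ?_⟩
      · intro s hsmem
        rcases Finset.mem_insert.1 hsmem with rfl | hsE
        · simpa [Sym2.mk_isDiag_iff] using huv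
        · exact hnd s hsE
      · intro x hx y hy hxy
        simp only [Finset.coe_insert, Set.mem_insert_iff, Finset.mem_coe] at hx hy
        rcases hx with rfl | hx <;> rcases hy with rfl | hy
        · rfl
        · exfalso
          rw [Function.update_self, Function.update_of_ne (by rintro rfl; exact hs hy)] at hxy
          exact ha (hxy ▸ (hmem y hy).1)
        · exfalso
          rw [Function.update_self, Function.update_of_ne (by rintro rfl; exact hs hx)] at hxy
          exact ha (hxy.symm ▸ (hmem x hx).1)
        · rw [Function.update_of_ne (by rintro rfl; exact hs hx),
            Function.update_of_ne (by rintro rfl; exact hs hy)] at hxy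
          exact hinj hx hy hxy
      · intro s hsmem
        rcases Finset.mem_insert.1 hsmem with rfl | hsE
        · rw [Function.update_self]
          refine ⟨Finset.mem_insert_self _ _, ?_⟩
          intro x hx
          rcases Sym2.mem_iff.1 hx with rfl | rfl <;> assumption
        · rw [Function.update_of_ne (by rintro rfl; exact hs hsE)]
          exact ⟨Finset.mem_insert_of_mem (hmem s hsE).1, (hmem s hsE).2⟩
      · exact hBH.trans (Finset.subset_insert _ _)
      · intro b hb x hx y hy hxy
        exact Finset.mem_insert_of_mem (hBE b hb x hx y hy hxy)
      · rw [Finset.card_insert_of_notMem ha, Finset.card_insert_of_notMem hs]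
        omega
    · push_neg at hc
      refine ⟨E, insert a B, c, hnd, hinj, ?_, ?_, ?_, ?_⟩
      · intro s hsE
        exact ⟨Finset.mem_insert_of_mem (hmem s hsE).1, (hmem s hsE).2⟩
      · exact Finset.insert_subset_insert _ hBH
      · intro b hb x hx y hy hxy
        rcases Finset.mem_insert.1 hb with rfl | hb
        · exact hc x hx y hy hxy
        · exact hBE b hb x hx y hy hxy
      · rw [Finset.card_insert_of_notMem ha,
          Finset.card_insert_of_notMem (fun h => ha (hBH h))]
        omega

/-- For `F` with at least one edge and `r ≥ 3`,
`ex(n,K_r,F) ≤ ex_r(n,F) ≤ ex(n,K_r,F) + ex(n,F)`. -/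
theorem stmt7 {α : Type*} [Fintype α] (F : SimpleGraph α)
    (hF : F.edgeSet.Nonempty) (r : ℕ) (hr : 3 ≤ r) (n : ℕ) :
    exClique n r F ≤ exr r n F ∧ exr r n F ≤ exClique n r F + exGraph n F := by
  classical
  -- F has an edge
  obtain ⟨e₀, he₀⟩ := hF
  obtain ⟨u₀, v₀, hadj₀⟩ : ∃ u v, F.Adj u v := by
    induction e₀ using Sym2.ind with
    | _ u v => exact ⟨u, v, he₀⟩
  -- the empty hypergraph avoids Berge-F
  have hemp : ¬ IsBerge F (∅ : Finset (Finset (Fin n))) := by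
    rintro ⟨ψ, φ, -, -, hmem, -⟩
    simpa using hmem _ he₀
  -- ⊥ is F-free
  have hbot : ¬ ContainsCopy F (⊥ : SimpleGraph (Fin n)) := by
    rintro ⟨f, hinj, hmap⟩
    exact hmap hadj₀
  -- boundedness of the three sets
  have bddR : BddAbove {m | ∃ H : Finset (Finset (Fin n)),
      (∀ e ∈ H, e.card = r) ∧ ¬ IsBerge F H ∧ H.card = m} := by
    refine ⟨Fintype.card (Finset (Fin n)), ?_⟩
    rintro m ⟨H, -, -, rfl⟩
    exact Finset.card_le_univ H
  have bddC : BddAbove {m | ∃ G : SimpleGraph (Fin n), ¬ ContainsCopy F G ∧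
      {s : Finset (Fin n) | G.IsNClique r s}.ncard = m} := by
    refine ⟨(Set.univ : Set (Finset (Fin n))).ncard, ?_⟩
    rintro m ⟨G, -, rfl⟩
    exact Set.ncard_le_ncard (Set.subset_univ _) Set.finite_univ
  have bddG : BddAbove {m | ∃ G : SimpleGraph (Fin n),
      ¬ ContainsCopy F G ∧ G.edgeSet.ncard = m} := by
    refine ⟨(Set.univ : Set (Sym2 (Fin n))).ncard, ?_⟩
    rintro m ⟨G, -, rfl⟩
    exact Set.ncard_le_ncard (Set.subset_univ _) Set.finite_univ
  constructor
  · -- exClique ≤ exr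
    refine csSup_le ⟨_, ⊥, hbot, rfl⟩ ?_
    rintro m ⟨G, hGfree, rfl⟩
    set S : Set (Finset (Fin n)) := {s | G.IsNClique r s} with hS
    have hSfin : S.Finite := S.toFinite
    refine le_csSup bddR ⟨hSfin.toFinset, ?_, ?_, ?_⟩
    · intro s hs
      exact ((hSfin.mem_toFinset.1 hs)).2
    · rintro ⟨ψ, φ, hψ, hφinj, hφmem, hφin⟩
      refine hGfree ⟨ψ, hψ, ?_⟩
      intro u v huv
      have hclq := hSfin.mem_toFinset.1 (hφmem _ (F.mem_edgeSet.mpr huv))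
      have h1 := hφin huv
      exact hclq.1 h1.1 h1.2 (fun h => huv.ne (hψ h))
    · exact (Set.ncard_eq_toFinset_card S hSfin).symm
  · -- exr ≤ exClique + exGraph
    refine csSup_le ⟨0, ∅, by simp, hemp, rfl⟩ ?_
    rintro m ⟨H, hunif, hnb, rfl⟩
    obtain ⟨E, B, c, hnd, hinj, hmem, hBH, hBE, hcard⟩ := greedy H
    set G : SimpleGraph (Fin n) :=
      { Adj := fun u v => u ≠ v ∧ s(u,v) ∈ E
        symm := ⟨by
          rintro u v ⟨h1, h2⟩
          exact ⟨h1.symm, Sym2.eq_swap ▸ h2⟩⟩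
        loopless := ⟨fun u h => h.1 rfl⟩ } with hG
    have hGfree : ¬ ContainsCopy F G := by
      rintro ⟨f, hinj', hmap⟩
      refine hnb ⟨f, fun e => c (Sym2.map f e), hinj', ?_, ?_, ?_⟩
      · intro e₁ he₁ e₂ he₂ heq
        have hE : ∀ e ∈ F.edgeSet, Sym2.map f e ∈ E := by
          intro e he
          induction e using Sym2.ind with
          | _ u v =>
            have := hmap he
            rw [Sym2.map_pair_eq]
            exact this.2
        have := hinj (hE e₁ he₁) (hE e₂ he₂) heq
        exact Sym2.map.injective hinj' this
      · intro e he
        induction e using Sym2.ind with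
        | _ u v =>
          have hadj := hmap he
          show c (Sym2.map f s(u, v)) ∈ H
          rw [Sym2.map_pair_eq]
          exact (hmem _ hadj.2).1
      · intro u v huv
        have hadj := hmap huv
        have hmm := (hmem _ hadj.2).2
        show f u ∈ c (Sym2.map f s(u, v)) ∧ f v ∈ c (Sym2.map f s(u, v))
        rw [Sym2.map_pair_eq]
        exact ⟨hmm _ (Sym2.mem_mk_left _ _), hmm _ (Sym2.mem_mk_right _ _)⟩
    -- edges of G are exactly E
    have hES : G.edgeSet = ↑E := by
      ext s
      induction s using Sym2.ind with
      | _ u v =>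
        simp only [SimpleGraph.mem_edgeSet, hG, Finset.mem_coe]
        constructor
        · exact fun h => h.2
        · intro h
          refine ⟨?_, h⟩
          intro heq
          exact hnd _ h (heq ▸ Sym2.mk_isDiag_iff.2 rfl)
    have hE1 : E.card ≤ exGraph n F := by
      refine le_csSup bddG ⟨G, hGfree, ?_⟩
      rw [hES, Set.ncard_coe_finset]
    have hB1 : B.card ≤ exClique n r F := by
      have hsub : ↑B ⊆ {s : Finset (Fin n) | G.IsNClique r s} := by
        intro b hb
        refine ⟨?_, hunif b (hBH hb)⟩
        intro x hx y hy hxy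
        exact ⟨hxy, hBE b hb x hx y hy hxy⟩
      have : B.card ≤ {s : Finset (Fin n) | G.IsNClique r s}.ncard := by
        rw [← Set.ncard_coe_finset]
        exact Set.ncard_le_ncard hsub (Set.toFinite _)
      exact this.trans (le_csSup bddC ⟨G, hGfree, rfl⟩)
    omega
end

section
/- Let G be a bipartite C_4-free simple graph with parts A and B, and let 1 ≤ i ≤ 3 and 1 ≤ j ≤ 3. Construct an (i+j)-uniform hypergraph H as follows: replace each vertex a ∈ A by i new vertices a_1,…,a_i, replace each vertex b ∈ B by j new vertices b_1,…,b_j, and replace each edge ab of G by the hyperedge {a_1,…,a_i, b_1,…,b_j}. Then H contains no Berge-C_4. -/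
open Filter

namespace Stmt11Aux

variable {A B : Type*}

/-- `w` is an endpoint of the edge `p`. -/
def Touch (w : A ⊕ B) (p : A × B) : Prop :=
  w = Sum.inl p.1 ∨ w = Sum.inr p.2

lemma touch_eq {w w' : A ⊕ B} {p q : A × B} (hww : w ≠ w')
    (h1 : Touch w p) (h2 : Touch w' p) (h3 : Touch w q) (h4 : Touch w' q) : p = q := by
  rcases h1 with h1 | h1 <;> rcases h2 with h2 | h2 <;>
    rcases h3 with h3 | h3 <;> rcases h4 with h4 | h4 <;>
    simp_all [Prod.ext_iff]

lemma touch_adj {G : SimpleGraph (A ⊕ B)} {w w' : A ⊕ B} {p : A × B}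
    (hadj : G.Adj (Sum.inl p.1) (Sum.inr p.2))
    (hww : w ≠ w') (h1 : Touch w p) (h2 : Touch w' p) : G.Adj w w' := by
  rcases h1 with h1 | h1 <;> rcases h2 with h2 | h2 <;> subst h1 <;> subst h2 <;>
    first
      | exact absurd rfl hww
      | exact hadj
      | exact hadj.symm

lemma adj_side {G : SimpleGraph (A ⊕ B)}
    (hbipA : ∀ a a' : A, ¬ G.Adj (Sum.inl a) (Sum.inl a'))
    (hbipB : ∀ b b' : B, ¬ G.Adj (Sum.inr b) (Sum.inr b'))
    {u v : A ⊕ B} (h : G.Adj u v) : u.isLeft ≠ v.isLeft := by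
  cases u with
  | inl a => cases v with
    | inl a' => exact absurd h (hbipA a a')
    | inr b => simp
  | inr b => cases v with
    | inl a => simp
    | inr b' => exact absurd h (hbipB b b')

lemma no_tri {G : SimpleGraph (A ⊕ B)}
    (hbipA : ∀ a a' : A, ¬ G.Adj (Sum.inl a) (Sum.inl a'))
    (hbipB : ∀ b b' : B, ¬ G.Adj (Sum.inr b) (Sum.inr b'))
    {x y z : A ⊕ B} (h1 : G.Adj x y) (h2 : G.Adj y z) (h3 : G.Adj z x) : False := by
  have a1 := adj_side hbipA hbipB h1
  have a2 := adj_side hbipA hbipB h2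
  have a3 := adj_side hbipA hbipB h3
  cases hx : x.isLeft <;> cases hy : y.isLeft <;> cases hz : z.isLeft <;> simp_all

lemma key {G : SimpleGraph (A ⊕ B)}
    (hbipA : ∀ a a' : A, ¬ G.Adj (Sum.inl a) (Sum.inl a'))
    (hbipB : ∀ b b' : B, ¬ G.Adj (Sum.inr b) (Sum.inr b'))
    (hC4 : ¬ ContainsCopy (SimpleGraph.cycleGraph 4) G)
    {w0 w1 w2 w3 : A ⊕ B} {p0 p1 p2 p3 : A × B}
    (ha0 : G.Adj (Sum.inl p0.1) (Sum.inr p0.2))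
    (ha1 : G.Adj (Sum.inl p1.1) (Sum.inr p1.2))
    (ha2 : G.Adj (Sum.inl p2.1) (Sum.inr p2.2))
    (ha3 : G.Adj (Sum.inl p3.1) (Sum.inr p3.2))
    (t00 : Touch w0 p0) (t10 : Touch w1 p0) (t11 : Touch w1 p1) (t21 : Touch w2 p1)
    (t22 : Touch w2 p2) (t32 : Touch w3 p2) (t33 : Touch w3 p3) (t03 : Touch w0 p3)
    (d01 : p0 ≠ p1) (d02 : p0 ≠ p2) (d03 : p0 ≠ p3)
    (d12 : p1 ≠ p2) (d13 : p1 ≠ p3) (d23 : p2 ≠ p3) :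
    w0 = w1 ∧ w1 = w2 ∧ w2 = w3 := by
  by_cases h02 : w0 = w2
  · subst h02
    have e1 : w0 = w1 := by
      by_contra hne
      exact d01 (touch_eq hne t00 t10 t21 t11)
    have e3 : w0 = w3 := by
      by_contra hne
      exact d23 (touch_eq hne t22 t32 t03 t33)
    exact ⟨e1, e1.symm, e3⟩
  by_cases h13 : w1 = w3
  · subst h13
    have e0 : w0 = w1 := by
      by_contra hne
      exact d03 (touch_eq hne t00 t10 t03 t33)
    have e2 : w1 = w2 := by
      by_contra hne
      exact d12 (touch_eq hne t11 t21 t32 t22)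
    exact absurd (e0.trans e2) h02
  exfalso
  have n01 : w0 ≠ w1 := by
    intro h01
    by_cases h23 : w2 = w3
    · have tA : Touch w0 p1 := by rw [h01]; exact t11
      have tB : Touch w2 p3 := by rw [h23]; exact t33
      exact d13 (touch_eq h02 tA t21 t03 tB)
    · have tA : Touch w0 p1 := by rw [h01]; exact t11
      exact no_tri hbipA hbipB (touch_adj ha1 h02 tA t21)
        (touch_adj ha2 h23 t22 t32)
        (touch_adj ha3 (fun h => h13 (h01.symm.trans h.symm)) t33 t03)
  have n12 : w1 ≠ w2 := by
    intro h12
    by_cases h30 : w3 = w0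
    · have tA : Touch w3 p0 := by rw [h30]; exact t00
      have tB : Touch w1 p2 := by rw [h12]; exact t22
      exact d02 (touch_eq h13 t10 tA tB t32)
    · have tB : Touch w1 p2 := by rw [h12]; exact t22
      exact no_tri hbipA hbipB (touch_adj ha2 h13 tB t32)
        (touch_adj ha3 h30 t33 t03)
        (touch_adj ha0 n01 t00 t10)
  have n23 : w2 ≠ w3 := by
    intro h23
    have tA : Touch w2 p3 := by rw [h23]; exact t33
    exact no_tri hbipA hbipB (touch_adj ha3 (fun h => h02 h.symm) tA t03)
      (touch_adj ha0 n01 t00 t10)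
      (touch_adj ha1 n12 t11 t21)
  have n30 : w3 ≠ w0 := by
    intro h30
    have tA : Touch w3 p0 := by rw [h30]; exact t00
    exact no_tri hbipA hbipB (touch_adj ha0 (fun h => h13 h.symm) tA t10)
      (touch_adj ha1 n12 t11 t21)
      (touch_adj ha2 n23 t22 t32)
  have a01 : G.Adj w0 w1 := touch_adj ha0 n01 t00 t10
  have a12 : G.Adj w1 w2 := touch_adj ha1 n12 t11 t21
  have a23 : G.Adj w2 w3 := touch_adj ha2 n23 t22 t32
  have a30 : G.Adj w3 w0 := touch_adj ha3 n30 t33 t03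
  apply hC4
  refine ⟨![w0, w1, w2, w3], ?_, ?_⟩
  · intro u v h
    fin_cases u <;> fin_cases v <;> simp_all
  · intro u v huv
    fin_cases u <;> fin_cases v <;>
      first
        | exact absurd huv (by decide)
        | exact a01 | exact a01.symm
        | exact a12 | exact a12.symm
        | exact a23 | exact a23.symm
        | exact a30 | exact a30.symm


def Ed {A B : Type*} [DecidableEq A] [DecidableEq B] (i j : ℕ) (p : A × B) :
    Finset (A × Fin i ⊕ B × Fin j) :=
  (Finset.univ.image fun x : Fin i => (Sum.inl (p.1, x) : A × Fin i ⊕ B × Fin j)) ∪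
    (Finset.univ.image fun y : Fin j => (Sum.inr (p.2, y) : A × Fin i ⊕ B × Fin j))

lemma mem_Ed {A B : Type*} [DecidableEq A] [DecidableEq B] {i j : ℕ} {p : A × B}
    {v : A × Fin i ⊕ B × Fin j} :
    v ∈ Ed i j p ↔ (∃ x, v = Sum.inl (p.1, x)) ∨ ∃ y, v = Sum.inr (p.2, y) := by
  simp [Ed, eq_comm]

/-- Projection back to the original vertices. -/
def proj {A B : Type*} {i j : ℕ} : A × Fin i ⊕ B × Fin j → A ⊕ B :=
  Sum.map Prod.fst Prod.fst

lemma touch_of_mem {A B : Type*} [DecidableEq A] [DecidableEq B] {i j : ℕ} {p : A × B}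
    {v : A × Fin i ⊕ B × Fin j} (hv : v ∈ Ed i j p) : Touch (proj v) p := by
  rcases mem_Ed.1 hv with ⟨x, rfl⟩ | ⟨y, rfl⟩
  · exact Or.inl rfl
  · exact Or.inr rfl

lemma Ed_inj {A B : Type*} [DecidableEq A] [DecidableEq B] {i j : ℕ}
    (hi : 1 ≤ i) (hj : 1 ≤ j) {p q : A × B} (h : Ed i j p = Ed i j q) : p = q := by
  have h1 : (Sum.inl (p.1, (⟨0, hi⟩ : Fin i)) : A × Fin i ⊕ B × Fin j) ∈ Ed i j q := by
    rw [← h]; exact mem_Ed.2 (Or.inl ⟨_, rfl⟩)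
  have h2 : (Sum.inr (p.2, (⟨0, hj⟩ : Fin j)) : A × Fin i ⊕ B × Fin j) ∈ Ed i j q := by
    rw [← h]; exact mem_Ed.2 (Or.inr ⟨_, rfl⟩)
  rcases mem_Ed.1 h1 with ⟨x, hx⟩ | ⟨y, hy⟩
  · rcases mem_Ed.1 h2 with ⟨x', hx'⟩ | ⟨y', hy'⟩
    · exact absurd hx' (by simp)
    · simp only [Sum.inl.injEq, Prod.mk.injEq] at hx
      simp only [Sum.inr.injEq, Prod.mk.injEq] at hy'
      exact Prod.ext hx.1 hy'.1
  · exact absurd hy (by simp)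

end Stmt11Aux

open Stmt11Aux in
/-- blowing up each vertex of part `A` of a bipartite `C_4`-free graph `G`
into `i ≤ 3` vertices, each vertex of part `B` into `j ≤ 3` vertices, and each edge into
the corresponding `(i+j)`-element hyperedge, yields a Berge-`C_4`-free hypergraph. -/
theorem stmt11 {A B : Type*} [Fintype A] [Fintype B] [DecidableEq A] [DecidableEq B]
    (G : SimpleGraph (A ⊕ B)) [DecidableRel G.Adj]
    (hbipA : ∀ a a' : A, ¬ G.Adj (Sum.inl a) (Sum.inl a'))
    (hbipB : ∀ b b' : B, ¬ G.Adj (Sum.inr b) (Sum.inr b'))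
    (hC4free : ¬ ContainsCopy (SimpleGraph.cycleGraph 4) G)
    (i j : ℕ) (hi1 : 1 ≤ i) (hi3 : i ≤ 3) (hj1 : 1 ≤ j) (hj3 : j ≤ 3) :
    ¬ IsBerge (SimpleGraph.cycleGraph 4)
      ((Finset.univ.filter fun p : A × B => G.Adj (Sum.inl p.1) (Sum.inr p.2)).image
        fun p : A × B =>
          (Finset.univ.image fun x : Fin i => (Sum.inl (p.1, x) : A × Fin i ⊕ B × Fin j)) ∪
          (Finset.univ.image fun y : Fin j =>
            (Sum.inr (p.2, y) : A × Fin i ⊕ B × Fin j))) := by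
  rintro ⟨ψ, φ, hψ, hφinj, hφmem, hadj⟩
  -- the four edges of the 4-cycle
  have e01 : (SimpleGraph.cycleGraph 4).Adj 0 1 := by decide
  have e12 : (SimpleGraph.cycleGraph 4).Adj 1 2 := by decide
  have e23 : (SimpleGraph.cycleGraph 4).Adj 2 3 := by decide
  have e30 : (SimpleGraph.cycleGraph 4).Adj 3 0 := by decide
  have hm0 := hφmem _ ((SimpleGraph.cycleGraph 4).mem_edgeSet.2 e01)
  have hm1 := hφmem _ ((SimpleGraph.cycleGraph 4).mem_edgeSet.2 e12)
  have hm2 := hφmem _ ((SimpleGraph.cycleGraph 4).mem_edgeSet.2 e23)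
  have hm3 := hφmem _ ((SimpleGraph.cycleGraph 4).mem_edgeSet.2 e30)
  obtain ⟨p0, hp0f, hp0⟩ := Finset.mem_image.1 hm0
  obtain ⟨p1, hp1f, hp1⟩ := Finset.mem_image.1 hm1
  obtain ⟨p2, hp2f, hp2⟩ := Finset.mem_image.1 hm2
  obtain ⟨p3, hp3f, hp3⟩ := Finset.mem_image.1 hm3
  have ha0 : G.Adj (Sum.inl p0.1) (Sum.inr p0.2) := (Finset.mem_filter.1 hp0f).2
  have ha1 : G.Adj (Sum.inl p1.1) (Sum.inr p1.2) := (Finset.mem_filter.1 hp1f).2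
  have ha2 : G.Adj (Sum.inl p2.1) (Sum.inr p2.2) := (Finset.mem_filter.1 hp2f).2
  have ha3 : G.Adj (Sum.inl p3.1) (Sum.inr p3.2) := (Finset.mem_filter.1 hp3f).2
  have hp0' : φ s((0 : Fin 4), 1) = Ed i j p0 := hp0.symm
  have hp1' : φ s((1 : Fin 4), 2) = Ed i j p1 := hp1.symm
  have hp2' : φ s((2 : Fin 4), 3) = Ed i j p2 := hp2.symm
  have hp3' : φ s((3 : Fin 4), 0) = Ed i j p3 := hp3.symm
  -- touches
  have t00 : Touch (proj (ψ 0)) p0 := touch_of_mem (hp0' ▸ (hadj e01).1)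
  have t10 : Touch (proj (ψ 1)) p0 := touch_of_mem (hp0' ▸ (hadj e01).2)
  have t11 : Touch (proj (ψ 1)) p1 := touch_of_mem (hp1' ▸ (hadj e12).1)
  have t21 : Touch (proj (ψ 2)) p1 := touch_of_mem (hp1' ▸ (hadj e12).2)
  have t22 : Touch (proj (ψ 2)) p2 := touch_of_mem (hp2' ▸ (hadj e23).1)
  have t32 : Touch (proj (ψ 3)) p2 := touch_of_mem (hp2' ▸ (hadj e23).2)
  have t33 : Touch (proj (ψ 3)) p3 := touch_of_mem (hp3' ▸ (hadj e30).1)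
  have t03 : Touch (proj (ψ 0)) p3 := touch_of_mem (hp3' ▸ (hadj e30).2)
  -- distinctness of the four edges
  have hdist : ∀ (e f : Sym2 (Fin 4)) (p q : A × B),
      e ∈ (SimpleGraph.cycleGraph 4).edgeSet → f ∈ (SimpleGraph.cycleGraph 4).edgeSet →
      e ≠ f → φ e = Ed i j p → φ f = Ed i j q → p ≠ q := by
    intro e f p q he hf hef hp hq hpq
    exact hef (hφinj he hf (by rw [hp, hq, hpq]))
  have me01 := (SimpleGraph.cycleGraph 4).mem_edgeSet.2 e01
  have me12 := (SimpleGraph.cycleGraph 4).mem_edgeSet.2 e12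
  have me23 := (SimpleGraph.cycleGraph 4).mem_edgeSet.2 e23
  have me30 := (SimpleGraph.cycleGraph 4).mem_edgeSet.2 e30
  have d01 : p0 ≠ p1 := hdist _ _ _ _ me01 me12 (by decide) hp0' hp1'
  have d02 : p0 ≠ p2 := hdist _ _ _ _ me01 me23 (by decide) hp0' hp2'
  have d03 : p0 ≠ p3 := hdist _ _ _ _ me01 me30 (by decide) hp0' hp3'
  have d12 : p1 ≠ p2 := hdist _ _ _ _ me12 me23 (by decide) hp1' hp2'
  have d13 : p1 ≠ p3 := hdist _ _ _ _ me12 me30 (by decide) hp1' hp3'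
  have d23 : p2 ≠ p3 := hdist _ _ _ _ me23 me30 (by decide) hp2' hp3'
  obtain ⟨k1, k2, k3⟩ := key hbipA hbipB hC4free ha0 ha1 ha2 ha3
    t00 t10 t11 t21 t22 t32 t33 t03 d01 d02 d03 d12 d13 d23
  -- all four projections are equal; 4 distinct vertices in a fiber of size ≤ 3
  have hall : ∀ k : Fin 4, proj (ψ k) = proj (ψ 0) := by
    intro k
    fin_cases k
    · rfl
    · exact k1.symm
    · exact (k1.trans k2).symm
    · exact ((k1.trans k2).trans k3).symm
  cases h0 : ψ 0 with
  | inl c =>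
    have hx : ∀ k : Fin 4, ∃ x : Fin i, ψ k = Sum.inl (c.1, x) := by
      intro k
      have := hall k
      rw [h0] at this
      cases hk : ψ k with
      | inl d =>
        rw [hk] at this
        refine ⟨d.2, ?_⟩
        have : d.1 = c.1 := Sum.inl.inj this
        rw [← this]
      | inr d => rw [hk] at this; exact absurd this (by simp [proj])
    choose x hxk using hx
    have hxinj : Function.Injective x := by
      intro k l hkl
      apply hψ
      rw [hxk k, hxk l, hkl]
    have : 4 ≤ i := by simpa using Fintype.card_le_of_injective x hxinj
    omega
  | inr c =>
    have hx : ∀ k : Fin 4, ∃ y : Fin j, ψ k = Sum.inr (c.1, y) := by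
      intro k
      have := hall k
      rw [h0] at this
      cases hk : ψ k with
      | inr d =>
        rw [hk] at this
        refine ⟨d.2, ?_⟩
        have : d.1 = c.1 := Sum.inr.inj this
        rw [← this]
      | inl d => rw [hk] at this; exact absurd this (by simp [proj])
    choose y hyk using hx
    have hyinj : Function.Injective y := by
      intro k l hkl
      apply hψ
      rw [hyk k, hyk l, hkl]
    have : 4 ≤ j := by simpa using Fintype.card_le_of_injective y hyinj
    omega
end

section
/- Let F be a simple graph with at least two edges, let e be an edge of F, and let r ≥ R(F, F\e), where R denotes the Ramsey number and F\e is F with the edge e deleted. Let H be an r-uniform hypergraph containing no Berge-F, and let R' be a set of edges of the 2-shadow Γ(H) such that every copy of F in Γ(H) contains at least one edge from R'. Then every hyperedge h of H contains a 2-element subset belonging to R' that is contained in at most |E(F)|-1 hyperedges of H. -/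
open Filter

open Finset in
lemma clique_lift {V : Type*} {A : Finset V} {C : SimpleGraph V} {D : SimpleGraph {w // w ∈ A}}
    (hD : ∀ a b : {w // w ∈ A}, D.Adj a b → C.Adj ↑a ↑b) {n : ℕ} {K' : Finset {w // w ∈ A}}
    (hK : D.IsNClique n K') :
    ∃ K : Finset V, C.IsNClique n K ∧ ∀ x ∈ K, x ∈ A := by
  classical
  refine ⟨K'.map ⟨Subtype.val, Subtype.val_injective⟩, ⟨?_, by simp [hK.2]⟩, ?_⟩
  · rintro x hx y hy hxy
    simp only [coe_map, Set.mem_image, Function.Embedding.coeFn_mk, mem_coe] at hx hy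
    obtain ⟨a, ha, rfl⟩ := hx
    obtain ⟨b, hb, rfl⟩ := hy
    exact hD a b (hK.1 ha hb (fun hab => hxy (by rw [hab])))
  · intro x hx
    simp only [Finset.mem_map, Function.Embedding.coeFn_mk] at hx
    obtain ⟨a, _, rfl⟩ := hx
    exact a.2

lemma ramsey_clique : ∀ (k s t : ℕ), s + t ≤ k → ∃ N : ℕ,
    ∀ (V : Type) [Fintype V], N ≤ Fintype.card V → ∀ C : SimpleGraph V,
      (∃ K : Finset V, C.IsNClique s K) ∨ (∃ K : Finset V, Cᶜ.IsNClique t K) := by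
  intro k
  induction k with
  | zero =>
    rintro s t hst
    obtain ⟨rfl, rfl⟩ : s = 0 ∧ t = 0 := by omega
    exact ⟨0, fun V _ _ C => Or.inl ⟨∅, by simp⟩⟩
  | succ k ih =>
    intro s t hst
    match s, t with
    | 0, t => exact ⟨0, fun V _ _ C => Or.inl ⟨∅, by simp⟩⟩
    | s+1, 0 => exact ⟨0, fun V _ _ C => Or.inr ⟨∅, by simp⟩⟩
    | s+1, t+1 =>
      obtain ⟨N₁, hN₁⟩ := ih s (t+1) (by omega)
      obtain ⟨N₂, hN₂⟩ := ih (s+1) t (by omega)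
      refine ⟨N₁ + N₂ + 1, fun V _ hcard C => ?_⟩
      classical
      have hpos : 0 < Fintype.card V := by omega
      obtain ⟨v⟩ := Fintype.card_pos_iff.mp hpos
      set A : Finset V := Finset.univ.filter (fun w => C.Adj v w) with hA
      set B : Finset V := Finset.univ.filter (fun w => w ≠ v ∧ ¬ C.Adj v w) with hB
      have hcover : (Finset.univ : Finset V) ⊆ A ∪ B ∪ {v} := by
        intro w _
        by_cases hw : w = v
        · simp [hw]
        · by_cases hadj : C.Adj v w
          · simp [Finset.mem_union, hA, hadj]
          · simp [Finset.mem_union, hB, hw, hadj]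
      have hsplit : N₁ ≤ A.card ∨ N₂ ≤ B.card := by
        by_contra hcon
        push_neg at hcon
        have h1 : Fintype.card V ≤ A.card + B.card + 1 := by
          calc Fintype.card V = (Finset.univ : Finset V).card := (Finset.card_univ).symm
          _ ≤ (A ∪ B ∪ {v}).card := Finset.card_le_card hcover
          _ ≤ (A ∪ B).card + ({v} : Finset V).card := Finset.card_union_le _ _
          _ ≤ A.card + B.card + 1 := by
              have := Finset.card_union_le A B
              simp only [Finset.card_singleton]
              omega
        omega
      rcases hsplit with hbig | hbig
      · -- red neighborhood big
        set D : SimpleGraph {w // w ∈ A} := C.comap Subtype.val with hD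
        have hAcard : N₁ ≤ Fintype.card {w // w ∈ A} := by rwa [Fintype.card_coe]
        rcases hN₁ _ hAcard D with ⟨K', hK'⟩ | ⟨K', hK'⟩
        · obtain ⟨K, hK, hKA⟩ := clique_lift (fun a b hab => hab) hK'
          refine Or.inl ⟨insert v K, hK.insert (fun b hb => ?_)⟩
          have := hKA b hb
          rw [hA] at this
          exact (Finset.mem_filter.mp this).2
        · have : ∀ a b : {w // w ∈ A}, Dᶜ.Adj a b → Cᶜ.Adj ↑a ↑b := by
            rintro a b ⟨hne, hnadj⟩
            exact ⟨fun hv => hne (Subtype.coe_injective hv), hnadj⟩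
          obtain ⟨K, hK, _⟩ := clique_lift this hK'
          exact Or.inr ⟨K, hK⟩
      · -- blue neighborhood big
        set D : SimpleGraph {w // w ∈ B} := C.comap Subtype.val with hD
        have hBcard : N₂ ≤ Fintype.card {w // w ∈ B} := by rwa [Fintype.card_coe]
        rcases hN₂ _ hBcard D with ⟨K', hK'⟩ | ⟨K', hK'⟩
        · obtain ⟨K, hK, _⟩ := clique_lift (fun a b hab => hab) hK'
          exact Or.inl ⟨K, hK⟩
        · have : ∀ a b : {w // w ∈ B}, Dᶜ.Adj a b → Cᶜ.Adj ↑a ↑b := by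
            rintro a b ⟨hne, hnadj⟩
            exact ⟨fun hv => hne (Subtype.coe_injective hv), hnadj⟩
          obtain ⟨K, hK, hKB⟩ := clique_lift this hK'
          refine Or.inr ⟨insert v K, hK.insert (fun b hb => ?_)⟩
          have := hKB b hb
          rw [hB] at this
          have hb2 := (Finset.mem_filter.mp this).2
          exact ⟨fun hv => hb2.1 hv.symm, fun hadj => hb2.2 hadj⟩


lemma exists_inj_choice {ι κ : Type*} [DecidableEq ι] [DecidableEq κ] [Nonempty κ] :
    ∀ (T : Finset ι) (S : ι → Finset κ), (∀ i ∈ T, T.card ≤ (S i).card) →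
      ∃ f : ι → κ, (∀ i ∈ T, f i ∈ S i) ∧ Set.InjOn f T := by
  intro T
  induction T using Finset.strongInduction with
  | _ T ih =>
    intro S hS
    rcases T.eq_empty_or_nonempty with rfl | ⟨i, hi⟩
    · exact ⟨fun _ => Classical.arbitrary κ, by simp, by simp⟩
    · have hSi : (S i).Nonempty := by
        rw [← Finset.card_pos]
        exact lt_of_lt_of_le (Finset.card_pos.mpr ⟨i, hi⟩) (hS i hi)
      obtain ⟨x, hx⟩ := hSi
      have hsub : T.erase i ⊂ T := Finset.erase_ssubset hi
      have hcond : ∀ j ∈ T.erase i, (T.erase i).card ≤ ((S j).erase x).card := by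
        intro j hj
        have hj' := Finset.mem_of_mem_erase hj
        have h1 := hS j hj'
        have h2 : (S j).card - 1 ≤ ((S j).erase x).card := Finset.pred_card_le_card_erase
        have h3 : (T.erase i).card = T.card - 1 := Finset.card_erase_of_mem hi
        omega
      obtain ⟨f', hf'mem, hf'inj⟩ := ih (T.erase i) hsub (fun j => (S j).erase x) hcond
      refine ⟨Function.update f' i x, ?_, ?_⟩
      · intro j hj
        by_cases hji : j = i
        · subst hji; simp [hx]
        · rw [Function.update_of_ne hji]
          exact Finset.erase_subset _ _ (hf'mem j (Finset.mem_erase.mpr ⟨hji, hj⟩))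
      · intro a ha b hb hab
        by_cases hai : a = i <;> by_cases hbi : b = i
        · rw [hai, hbi]
        · exfalso
          rw [hai, Function.update_self, Function.update_of_ne hbi] at hab
          exact (Finset.mem_erase.mp (hf'mem b (Finset.mem_erase.mpr ⟨hbi, hb⟩))).1 hab.symm
        · exfalso
          rw [hbi, Function.update_self, Function.update_of_ne hai] at hab
          exact (Finset.mem_erase.mp (hf'mem a (Finset.mem_erase.mpr ⟨hai, ha⟩))).1 hab
        · rw [Function.update_of_ne hai, Function.update_of_ne hbi] at hab
          exact hf'inj (Finset.mem_coe.mpr (Finset.mem_erase.mpr ⟨hai, ha⟩))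
            (Finset.mem_coe.mpr (Finset.mem_erase.mpr ⟨hbi, hb⟩)) hab

lemma containsCopy_of_clique {α V : Type*} [Fintype α] (F : SimpleGraph α)
    (C : SimpleGraph V) (K : Finset V) (hK : C.IsNClique (Fintype.card α) K) :
    ContainsCopy F C := by
  classical
  refine ⟨fun a => ↑((Finset.equivFinOfCardEq hK.2).symm ((Fintype.equivFin α) a)), ?_, ?_⟩
  · exact Subtype.val_injective.comp
      ((Finset.equivFinOfCardEq hK.2).symm.injective.comp (Fintype.equivFin α).injective)
  · intro u v huv
    refine hK.1 ?_ ?_ ?_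
    · exact Finset.mem_coe.mpr (Subtype.mem _)
    · exact Finset.mem_coe.mpr (Subtype.mem _)
    · intro hEq
      exact huv.ne (((Fintype.equivFin α).injective)
        ((Finset.equivFinOfCardEq hK.2).symm.injective (Subtype.val_injective hEq)))

lemma ramsey_prop_of_le {α β : Type*} [Fintype α] [Fintype β]
    (F : SimpleGraph α) (G : SimpleGraph β) {r : ℕ} (hr : ramsey F G ≤ r) :
    ∀ C : SimpleGraph (Fin r), ContainsCopy F C ∨ ContainsCopy G Cᶜ := by
  classical
  set S := {N | ∀ C : SimpleGraph (Fin N), ContainsCopy F C ∨ ContainsCopy G Cᶜ} with hSdef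
  have hmono : ∀ M ∈ S, ∀ M', M ≤ M' → M' ∈ S := by
    intro M hM M' hMM' C'
    set C : SimpleGraph (Fin M) := C'.comap (Fin.castLE hMM') with hC
    rcases hM C with ⟨f, finj, fadj⟩ | ⟨f, finj, fadj⟩
    · refine Or.inl ⟨(Fin.castLE hMM') ∘ f, ?_, fun u v huv => fadj huv⟩
      exact (Fin.castLE_injective hMM').comp finj
    · refine Or.inr ⟨(Fin.castLE hMM') ∘ f, (Fin.castLE_injective hMM').comp finj, ?_⟩
      intro u v huv
      obtain ⟨hne, hnadj⟩ := fadj huv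
      exact ⟨fun hEq => hne (Fin.castLE_injective hMM' hEq), hnadj⟩
  have hne : S.Nonempty := by
    obtain ⟨N, hN⟩ := ramsey_clique (Fintype.card α + Fintype.card β)
      (Fintype.card α) (Fintype.card β) le_rfl
    refine ⟨N, fun C => ?_⟩
    rcases hN (Fin N) (by simp) C with ⟨K, hK⟩ | ⟨K, hK⟩
    · exact Or.inl (containsCopy_of_clique F C K hK)
    · exact Or.inr (containsCopy_of_clique G Cᶜ K hK)
  have h1 : sInf S ∈ S := Nat.sInf_mem hne
  exact hmono _ h1 r hr

/-- With `F` having at least two edges, `e ∈ E(F)`, `r ≥ R(F, F\e)`,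
`H` an `r`-uniform Berge-`F`-free hypergraph, and `R'` a set of edges of the 2-shadow
meeting every copy of `F` in the shadow, every hyperedge of `H` contains a pair from `R'`
that lies in at most `|E(F)| - 1` hyperedges of `H`. -/
theorem stmt13 {α : Type*} [Fintype α] (F : SimpleGraph α)
    (hF : 2 ≤ F.edgeSet.ncard) (e : Sym2 α) (he : e ∈ F.edgeSet)
    (r : ℕ) (hr : ramsey F (F.deleteEdges {e}) ≤ r)
    {n : ℕ} (H : Finset (Finset (Fin n)))
    (hunif : ∀ h ∈ H, h.card = r) (hberge : ¬ IsBerge F H)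
    (R' : Set (Sym2 (Fin n))) (hR'sub : R' ⊆ (shadow H).edgeSet)
    (hR' : ∀ G' : (shadow H).Subgraph, Nonempty (F ≃g G'.coe) →
      ∃ ed ∈ R', ed ∈ G'.edgeSet)
    (h : Finset (Fin n)) (hh : h ∈ H) :
    ∃ u v : Fin n, u ≠ v ∧ u ∈ h ∧ v ∈ h ∧ s(u, v) ∈ R' ∧
      {h' : Finset (Fin n) | h' ∈ H ∧ u ∈ h' ∧ v ∈ h'}.ncard ≤ F.edgeSet.ncard - 1 := by
  classical
  by_contra hcon
  push_neg at hcon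
  set m := F.edgeSet.ncard with hm
  -- an indexing of the vertices of h
  set eqv : ↥h ≃ Fin r := Finset.equivFinOfCardEq (hunif h hh) with heqv
  set ι : Fin r → Fin n := fun i => ↑(eqv.symm i) with hι
  have ιinj : Function.Injective ι := fun i j hij =>
    eqv.symm.injective (Subtype.val_injective hij)
  have ιmem : ∀ i, ι i ∈ h := fun i => (eqv.symm i).2
  -- the coloring
  set C : SimpleGraph (Fin r) :=
    { Adj := fun i j => i ≠ j ∧ s(ι i, ι j) ∉ R'
      symm := ⟨by
        rintro i j ⟨hne, hns⟩
        exact ⟨hne.symm, by rwa [Sym2.eq_swap]⟩⟩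
      loopless := ⟨fun i hi => hi.1 rfl⟩ } with hC
  rcases ramsey_prop_of_le F (F.deleteEdges {e}) hr C with ⟨f, finj, fadj⟩ | ⟨f, finj, fadj⟩
  · -- red case: a copy of F in the shadow avoiding R'
    set ψ : α → Fin n := fun a => ι (f a) with hψ
    have ψinj : Function.Injective ψ := ιinj.comp finj
    set G' : (shadow H).Subgraph :=
      { verts := Set.range ψ
        Adj := fun a b => ∃ u v, F.Adj u v ∧ ψ u = a ∧ ψ v = b
        adj_sub := by
          rintro a b ⟨u, v, huv, rfl, rfl⟩
          exact ⟨fun hEq => huv.ne (ψinj hEq), h, hh, ιmem _, ιmem _⟩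
        edge_vert := by
          rintro a b ⟨u, v, huv, rfl, rfl⟩
          exact ⟨u, rfl⟩
        symm := ⟨by
          rintro a b ⟨u, v, huv, rfl, rfl⟩
          exact ⟨v, u, huv.symm, rfl, rfl⟩⟩ } with hG'
    have hiso : Nonempty (F ≃g G'.coe) := by
      refine ⟨{ toEquiv := Equiv.ofInjective ψ ψinj, map_rel_iff' := ?_ }⟩
      intro u v
      constructor
      · rintro ⟨u', v', huv, h1, h2⟩
        have h1' : ψ u' = ψ u := h1
        have h2' : ψ v' = ψ v := h2
        rwa [ψinj h1', ψinj h2'] at huv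
      · intro huv
        exact ⟨u, v, huv, rfl, rfl⟩
    obtain ⟨ed, hedR, hedE⟩ := hR' G' hiso
    revert hedR hedE
    refine Sym2.ind (fun a b hedR hedE => ?_) ed
    rw [SimpleGraph.Subgraph.mem_edgeSet] at hedE
    obtain ⟨u, v, huv, rfl, rfl⟩ := hedE
    exact (fadj huv).2 hedR
  · -- blue case: a copy of F∖e all of whose edges are in R', hence fat
    set ψ : α → Fin n := fun a => ι (f a) with hψ
    have ψinj : Function.Injective ψ := ιinj.comp finj
    have key : ∀ u v : α, F.Adj u v → s(u, v) ≠ e →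
        s(ψ u, ψ v) ∈ R' ∧
          m ≤ (H.filter (fun h' => ψ u ∈ h' ∧ ψ v ∈ h')).card := by
      intro u v huv hne
      have hdel : (F.deleteEdges {e}).Adj u v := by
        rw [SimpleGraph.deleteEdges_adj]
        exact ⟨huv, by simpa using hne⟩
      have hcadj := fadj hdel
      rw [SimpleGraph.compl_adj] at hcadj
      have hfne : f u ≠ f v := hcadj.1
      have hmemR : s(ψ u, ψ v) ∈ R' := by
        by_contra hnR
        exact hcadj.2 ⟨hfne, hnR⟩
      have hψne : ψ u ≠ ψ v := fun hEq => hfne (ιinj hEq)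
      have hlt := hcon (ψ u) (ψ v) hψne (ιmem _) (ιmem _) hmemR
      have hset : {h' : Finset (Fin n) | h' ∈ H ∧ ψ u ∈ h' ∧ ψ v ∈ h'} =
          ↑(H.filter (fun h' => ψ u ∈ h' ∧ ψ v ∈ h')) := by
        ext h'
        simp [Finset.mem_filter]
      rw [hset, Set.ncard_coe_finset] at hlt
      exact ⟨hmemR, by omega⟩
    -- build a Berge-F
    have hmcard : m = F.edgeSet.toFinset.card := Set.ncard_eq_toFinset_card' _
    set T : Finset (Sym2 α) := F.edgeSet.toFinset.erase e with hT
    have heT : e ∈ F.edgeSet.toFinset := Set.mem_toFinset.mpr he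
    have hTcard : T.card = m - 1 := by
      rw [hT, Finset.card_erase_of_mem heT, hmcard]
    set S : Sym2 α → Finset (Finset (Fin n)) :=
      fun d => (H.filter (fun h' => ∀ x ∈ Sym2.map ψ d, x ∈ h')).erase h with hS
    have hScard : ∀ d ∈ T, T.card ≤ (S d).card := by
      intro d hd
      obtain ⟨hdne, hdmem⟩ := Finset.mem_erase.mp hd
      rw [Set.mem_toFinset] at hdmem
      revert hdne hdmem
      refine Sym2.ind (fun u v hdne hdmem => ?_) d
      rw [SimpleGraph.mem_edgeSet] at hdmem
      obtain ⟨-, hfat⟩ := key u v hdmem hdne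
      have hfilter_eq : (H.filter (fun h' => ∀ x ∈ Sym2.map ψ s(u, v), x ∈ h')) =
          (H.filter (fun h' => ψ u ∈ h' ∧ ψ v ∈ h')) := by
        apply Finset.filter_congr
        intro h' _
        rw [Sym2.map_pair_eq]
        constructor
        · intro hall
          exact ⟨hall _ (Sym2.mem_mk_left _ _), hall _ (Sym2.mem_mk_right _ _)⟩
        · rintro ⟨h1, h2⟩ x hx
          rcases Sym2.mem_iff.mp hx with rfl | rfl
          · exact h1
          · exact h2
      have h1 : (S s(u, v)).card ≥
          (H.filter (fun h' => ψ u ∈ h' ∧ ψ v ∈ h')).card - 1 := by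
        rw [hS]
        simp only [hfilter_eq]
        exact Finset.pred_card_le_card_erase
      omega
    obtain ⟨g, gmem, ginj⟩ := exists_inj_choice T S hScard
    set φ : Sym2 α → Finset (Fin n) := fun d => if d = e then h else g d with hφ
    have hTmem : ∀ d ∈ F.edgeSet, d ≠ e → d ∈ T := by
      intro d hd hdne
      exact Finset.mem_erase.mpr ⟨hdne, Set.mem_toFinset.mpr hd⟩
    have hgS : ∀ d ∈ T, g d ∈ S d := gmem
    apply hberge
    refine ⟨ψ, φ, ψinj, ?_, ?_, ?_⟩
    · -- InjOn φ on edgeSet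
      intro d₁ hd₁ d₂ hd₂ hEq
      by_cases h1 : d₁ = e <;> by_cases h2 : d₂ = e
      · rw [h1, h2]
      · exfalso
        rw [hφ] at hEq
        simp only [h1, if_pos, if_neg h2] at hEq
        have := hgS d₂ (hTmem d₂ hd₂ h2)
        rw [hS] at this
        exact (Finset.mem_erase.mp this).1 hEq.symm
      · exfalso
        rw [hφ] at hEq
        simp only [h2, if_pos, if_neg h1] at hEq
        have := hgS d₁ (hTmem d₁ hd₁ h1)
        rw [hS] at this
        exact (Finset.mem_erase.mp this).1 hEq
      · rw [hφ] at hEq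
        simp only [if_neg h1, if_neg h2] at hEq
        exact ginj (Finset.mem_coe.mpr (hTmem d₁ hd₁ h1))
          (Finset.mem_coe.mpr (hTmem d₂ hd₂ h2)) hEq
    · -- φ maps into H
      intro d hd
      rw [hφ]
      by_cases h1 : d = e
      · simp only [h1, if_pos]
        exact hh
      · simp only [if_neg h1]
        have := hgS d (hTmem d hd h1)
        rw [hS] at this
        exact Finset.mem_of_mem_filter _ (Finset.mem_of_mem_erase this)
    · -- endpoints belong
      intro u v huv
      rw [hφ]
      by_cases h1 : s(u, v) = e
      · simp only [h1, if_pos]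
        exact ⟨ιmem _, ιmem _⟩
      · simp only [if_neg h1]
        have hmem := hgS s(u, v) (hTmem s(u, v) (F.mem_edgeSet.mpr huv) h1)
        rw [hS] at hmem
        have := Finset.mem_of_mem_erase hmem
        have hall := (Finset.mem_filter.mp this).2
        rw [Sym2.map_pair_eq] at hall
        exact ⟨hall _ (Sym2.mem_mk_left _ _), hall _ (Sym2.mem_mk_right _ _)⟩
end

section
/- Let s ≥ 3 and let F be a blowup of K_s, i.e. a complete s-partite graph with nonempty parts. Then for every integer r with 2 ≤ r ≤ (s-1)·(|V(F)|-1), there exists a constant c > 0 such that for all sufficiently large n there is an r-uniform hypergraph on n vertices containing no Berge-F with at least c·n^2 hyperedges; consequently ex_r(n,F) = Ω(n^2) for all 2 ≤ r ≤ (s-1)(|V(F)|-1). -/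
open Filter

lemma exists_composition (M : ℕ) (hM : 1 ≤ M) :
    ∀ k r : ℕ, k ≤ r → r ≤ k * M → ∃ t : Fin k → ℕ, (∀ i, 1 ≤ t i ∧ t i ≤ M) ∧ ∑ i, t i = r := by
  intro k
  induction k with
  | zero =>
    intro r h1 h2
    refine ⟨fun i => 1, fun i => i.elim0, ?_⟩
    simp only [Finset.univ_eq_empty, Finset.sum_empty]
    omega
  | succ k ih =>
    intro r hkr hrM
    have hkM : k ≤ k * M := Nat.le_mul_of_pos_right k hM
    have hk1M : r ≤ k * M + M := by rw [Nat.succ_mul] at hrM; omega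
    set a := max 1 (r - k * M) with ha
    have hcase := max_choice 1 (r - k * M)
    have h1 : 1 ≤ a := le_max_left _ _
    have haM : a ≤ M := by omega
    have h2 : k ≤ r - a := by omega
    have h3 : r - a ≤ k * M := by omega
    obtain ⟨t', ht', hsum⟩ := ih (r - a) h2 h3
    refine ⟨Fin.snoc t' a, ?_, ?_⟩
    · intro i
      induction i using Fin.lastCases with
      | last => simpa using ⟨h1, haM⟩
      | cast i => simpa using ht' i
    · rw [Fin.sum_univ_castSucc]
      simp only [Fin.snoc_castSucc, Fin.snoc_last, hsum]
      omega


lemma exists_k (s M r : ℕ) (hs : 3 ≤ s) (hM2 : 2 ≤ M) (hr2 : 2 ≤ r)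
    (hr : r ≤ (s - 1) * M) :
    ∃ k, 2 ≤ k ∧ k < s ∧ k ≤ r ∧ r ≤ k * M := by
  by_cases hcase : r ≤ 2 * M
  · exact ⟨2, le_refl _, by omega, hr2, hcase⟩
  · push_neg at hcase
    have hdm := Nat.div_add_mod (r + M - 1) M
    have hmod := Nat.mod_lt (r + M - 1) (show 0 < M by omega)
    set D := (r + M - 1) / M with hD
    have hrD : r ≤ M * D := by omega
    have hD2 : 2 ≤ D := by
      by_contra h
      push_neg at h
      have := Nat.mul_le_mul (le_refl M) (show D ≤ 1 by omega)
      omega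
    have hDs : D < s := by
      have h2 : D ≤ ((M - 1) + M * (s - 1)) / M := Nat.div_le_div_right (by
        have hcomm : (s - 1) * M = M * (s - 1) := Nat.mul_comm _ _
        omega)
      rw [Nat.add_mul_div_left _ _ (show 0 < M by omega)] at h2
      have h3 : (M - 1) / M = 0 := Nat.div_eq_of_lt (by omega)
      omega
    have hDr : D ≤ r := by
      have hD1 : D - 1 ≤ M * (D - 1) := Nat.le_mul_of_pos_left _ (by omega)
      have hmul : M * (D - 1) + M = M * D := by
        rw [← Nat.mul_succ]
        congr 1
        omega
      omega
    exact ⟨D, hD2, hDs, hDr, by have := Nat.mul_comm M D; omega⟩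

lemma construction {s k r q n : ℕ} (V : Fin s → Type*) [∀ i, Fintype (V i)]
    [∀ i, Nonempty (V i)]
    (hs : 3 ≤ s) (hk2 : 2 ≤ k) (hks : k < s)
    (t : Fin k → ℕ) (ht1 : ∀ i, 1 ≤ t i) (htm : ∀ i, t i < Fintype.card (Σ i, V i))
    (htr : ∑ i, t i = r)
    (hq : q.Prime) (hkq : k ≤ q) (hn : q * r ≤ n) :
    ∃ H : Finset (Finset (Fin n)),
      (∀ e ∈ H, e.card = r) ∧ ¬ IsBerge (SimpleGraph.completeMultipartiteGraph V) H ∧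
      H.card = q ^ 2 := by
  haveI : Fact q.Prime := ⟨hq⟩
  have hcard : Fintype.card (Σ i : Fin k, ZMod q × Fin (t i)) = q * r := by
    simp [Fintype.card_sigma, ZMod.card, ← htr, Finset.mul_sum]
  let ι : (Σ i : Fin k, ZMod q × Fin (t i)) ↪ Fin n :=
    (Fintype.equivFin _).toEmbedding.trans (Fin.castLEEmb (hcard ▸ hn))
  let e : ZMod q → ZMod q → Finset (Σ i : Fin k, ZMod q × Fin (t i)) := fun a b =>
    Finset.univ.sigma (fun i : Fin k => {a + (i : ℕ) * b} ×ˢ Finset.univ)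
  have hmem : ∀ a b (v : Σ i : Fin k, ZMod q × Fin (t i)),
      v ∈ e a b ↔ v.2.1 = a + (v.1 : ℕ) * b := by
    rintro a b ⟨i, x, j⟩
    simp [e, Finset.mem_sigma, Finset.mem_product, eq_comm]
  have hecard : ∀ a b, (e a b).card = r := by
    intro a b
    rw [show (e a b).card = ∑ i : Fin k, ({a + (i : ℕ) * b} ×ˢ (Finset.univ : Finset (Fin (t i)))).card
        from Finset.card_sigma _ _]
    simp [htr]
  -- cast injectivity
  have hcast : ∀ i j : Fin k, i ≠ j → (((i : ℕ) : ZMod q) ≠ ((j : ℕ) : ZMod q)) := by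
    intro i j hij h
    apply hij
    have hi := ZMod.val_natCast_of_lt (lt_of_lt_of_le i.isLt hkq)
    have hj := ZMod.val_natCast_of_lt (lt_of_lt_of_le j.isLt hkq)
    apply Fin.ext
    rw [← hi, ← hj, h]
  -- codeword lemma
  have L0 : ∀ (a b a' b' : ZMod q) (i j : Fin k), i ≠ j →
      a + (i : ℕ) * b = a' + (i : ℕ) * b' → a + (j : ℕ) * b = a' + (j : ℕ) * b' →
      a = a' ∧ b = b' := by
    intro a b a' b' i j hij h1 h2
    have hbb : (((i : ℕ) : ZMod q) - ((j : ℕ) : ZMod q)) * (b - b') = 0 := by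
      linear_combination h1 - h2
    have hb : b = b' := by
      rcases mul_eq_zero.mp hbb with h | h
      · exact absurd (sub_eq_zero.mp h) (hcast i j hij)
      · exact sub_eq_zero.mp h
    subst hb
    exact ⟨add_right_cancel h1, rfl⟩
  -- injectivity of e
  have heinj : Function.Injective (fun p : ZMod q × ZMod q => e p.1 p.2) := by
    rintro ⟨a, b⟩ ⟨a', b'⟩ hE
    simp only at hE
    have hcoord : ∀ i : Fin k, a + (i : ℕ) * b = a' + (i : ℕ) * b' := by
      intro i
      have hv : (⟨i, (a + (i : ℕ) * b, ⟨0, ht1 i⟩)⟩ : Σ i : Fin k, ZMod q × Fin (t i)) ∈ e a b := by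
        rw [hmem]
      rw [hE] at hv
      exact (hmem _ _ _).mp hv
    have h0 : (⟨0, by omega⟩ : Fin k) ≠ ⟨1, by omega⟩ := by simp [Fin.ext_iff]
    obtain ⟨h1, h2⟩ := L0 a b a' b' ⟨0, by omega⟩ ⟨1, by omega⟩ h0
      (hcoord ⟨0, by omega⟩) (hcoord ⟨1, by omega⟩)
    rw [h1, h2]
  refine ⟨Finset.image (fun p : ZMod q × ZMod q => (e p.1 p.2).map ι) Finset.univ, ?_, ?_, ?_⟩
  · rintro E hE
    obtain ⟨⟨a, b⟩, -, rfl⟩ := Finset.mem_image.mp hE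
    rw [Finset.card_map]; exact hecard a b
  · -- no Berge
    rintro ⟨ψ, φ, hψ, hφ, hφH, hcov⟩
    have hFadj : ∀ u v : (i : Fin s) × V i,
        (SimpleGraph.completeMultipartiteGraph V).Adj u v ↔ u.1 ≠ v.1 := by
      intro u v; simp [SimpleGraph.completeMultipartiteGraph]
    have hW : ∀ u : (i : Fin s) × V i, ∃ v', ι v' = ψ u := by
      intro u
      obtain ⟨j, hj⟩ : ∃ j : Fin s, j ≠ u.1 := by
        rcases eq_or_ne u.1 ⟨0, by omega⟩ with h | h
        · exact ⟨⟨1, by omega⟩, by rw [h]; simp [Fin.ext_iff]⟩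
        · exact ⟨⟨0, by omega⟩, Ne.symm h⟩
      have hadj : (SimpleGraph.completeMultipartiteGraph V).Adj u ⟨j, Classical.arbitrary _⟩ :=
        (hFadj _ _).mpr (Ne.symm hj)
      have h1 := (hcov hadj).1
      have h2 := hφH _ ((SimpleGraph.mem_edgeSet _).mpr hadj)
      obtain ⟨⟨a, b⟩, -, hEq⟩ := Finset.mem_image.mp h2
      rw [← hEq] at h1
      obtain ⟨v', -, hv'⟩ := Finset.mem_map.mp h1
      exact ⟨v', hv'⟩
    choose w hw using hW
    have hwinj : Function.Injective w := by
      intro u u' h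
      apply hψ; rw [← hw, ← hw, h]
    have hedge : ∀ {u v : (i : Fin s) × V i}, u.1 ≠ v.1 →
        ∃ a b, φ s(u, v) = (e a b).map ι ∧
          (w u).2.1 = a + ((w u).1 : ℕ) * b ∧ (w v).2.1 = a + ((w v).1 : ℕ) * b := by
      intro u v huv
      have hadj : (SimpleGraph.completeMultipartiteGraph V).Adj u v := (hFadj _ _).mpr huv
      have h2 := hφH _ ((SimpleGraph.mem_edgeSet _).mpr hadj)
      obtain ⟨⟨a, b⟩, -, hEq⟩ := Finset.mem_image.mp h2
      refine ⟨a, b, hEq.symm, ?_, ?_⟩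
      · have h1 := (hcov hadj).1
        rw [← hEq] at h1
        obtain ⟨v', hv'e, hv'⟩ := Finset.mem_map.mp h1
        have hvw : v' = w u := ι.injective (by rw [hv', hw])
        exact (hmem _ _ _).mp (hvw ▸ hv'e)
      · have h1 := (hcov hadj).2
        rw [← hEq] at h1
        obtain ⟨v', hv'e, hv'⟩ := Finset.mem_map.mp h1
        have hvw : v' = w v := ι.injective (by rw [hv', hw])
        exact (hmem _ _ _).mp (hvw ▸ hv'e)
    have L2 : ∀ {u v z : (i : Fin s) × V i}, u.1 ≠ v.1 → u.1 ≠ z.1 → v.1 ≠ z.1 →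
        (w u).1 = (w v).1 → (w z).1 = (w u).1 ∧ (w z).2.1 = (w u).2.1 := by
      intro u v z huv huz hvz hcc
      by_cases hcz : (w z).1 = (w u).1
      · refine ⟨hcz, ?_⟩
        obtain ⟨a, b, -, h1, h2⟩ := hedge huz
        rw [h2, hcz, h1]
      · exfalso
        obtain ⟨a, b, hE1, hu1, hz1⟩ := hedge huz
        obtain ⟨a', b', hE2, hv2, hz2⟩ := hedge hvz
        obtain ⟨a'', b'', -, hu3, hv3⟩ := hedge huv
        have hx : (w u).2.1 = (w v).2.1 := by rw [hu3, hv3, hcc]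
        have heq1 : a + ((w u).1 : ℕ) * b = a' + ((w u).1 : ℕ) * b' := by
          rw [← hu1, hx, hv2, hcc]
        have heq2 : a + ((w z).1 : ℕ) * b = a' + ((w z).1 : ℕ) * b' := by
          rw [← hz1, hz2]
        obtain ⟨ha, hb⟩ := L0 a b a' b' _ _ (fun h => hcz h.symm) heq1 heq2
        have hφeq : φ s(u, z) = φ s(v, z) := by rw [hE1, hE2, ha, hb]
        have hsym := hφ ((SimpleGraph.mem_edgeSet _).mpr ((hFadj _ _).mpr huz))
          ((SimpleGraph.mem_edgeSet _).mpr ((hFadj _ _).mpr hvz)) hφeq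
        rw [Sym2.eq_iff] at hsym
        rcases hsym with ⟨h1, -⟩ | ⟨h1, -⟩
        · exact huv (congrArg Sigma.fst h1)
        · exact huz (congrArg Sigma.fst h1)
    have hcard_lt : Fintype.card (Fin k) < Fintype.card (Fin s) := by simpa using hks
    obtain ⟨a0, b0, hab, hc⟩ := Fintype.exists_ne_map_eq_of_card_lt
      (fun i : Fin s => (w ⟨i, Classical.arbitrary (V i)⟩).1) hcard_lt
    have hab' : a0 ≠ b0 := hab
    set u₀ : (i : Fin s) × V i := ⟨a0, Classical.arbitrary (V a0)⟩ with hu₀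
    set v₀ : (i : Fin s) × V i := ⟨b0, Classical.arbitrary (V b0)⟩ with hv₀
    have hc' : (w u₀).1 = (w v₀).1 := hc
    obtain ⟨γ, hγa, hγb⟩ : ∃ γ : Fin s, γ ≠ a0 ∧ γ ≠ b0 := by
      by_contra hcon
      push_neg at hcon
      have hsub : (Finset.univ : Finset (Fin s)) ⊆ {a0, b0} := by
        intro γ _
        by_cases h : γ = a0
        · simp [h]
        · simp [hcon γ h]
      have hle := Finset.card_le_card hsub
      rw [Finset.card_univ, Fintype.card_fin] at hle
      have h2 : ({a0, b0} : Finset (Fin s)).card ≤ 2 :=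
        (Finset.card_insert_le _ _).trans (by simp)
      omega
    set zγ : (i : Fin s) × V i := ⟨γ, Classical.arbitrary (V γ)⟩ with hzγ
    have h1 := L2 (u := u₀) (v := v₀) (z := zγ) hab' (Ne.symm hγa) (Ne.symm hγb) hc'
    have key : ∀ z : (i : Fin s) × V i, (w z).1 = (w u₀).1 ∧ (w z).2.1 = (w u₀).2.1 := by
      intro z
      by_cases hza : z.1 = a0
      · have h2 := L2 (u := zγ) (v := v₀) (z := z) hγb
          (fun h => hγa (h.trans hza)) (fun h => hab' ((h.trans hza)).symm)
          (h1.1.trans hc')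
        exact ⟨h2.1.trans h1.1, h2.2.trans h1.2⟩
      · by_cases hzb : z.1 = b0
        · have h2 := L2 (u := zγ) (v := u₀) (z := z) hγa
            (fun h => hγb (h.trans hzb)) (fun h => hab' (h.trans hzb))
            h1.1
          exact ⟨h2.1.trans h1.1, h2.2.trans h1.2⟩
        · exact L2 hab' (fun h => hza h.symm) (fun h => hzb h.symm) hc'
    have hfin : Fintype.card ((i : Fin s) × V i) ≤ t ((w u₀).1) := by
      have hsub : ∀ z, w z ∈ (({(w u₀).1} : Finset (Fin k)).sigma
          (fun i => ({(w u₀).2.1} : Finset (ZMod q)) ×ˢ (Finset.univ : Finset (Fin (t i))))) := by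
        intro z
        rw [Finset.mem_sigma]
        refine ⟨by simp [(key z).1], ?_⟩
        rw [Finset.mem_product]
        exact ⟨by simp [(key z).2], Finset.mem_univ _⟩
      calc Fintype.card ((i : Fin s) × V i) = (Finset.univ.image w).card := by
            rw [Finset.card_image_of_injective _ hwinj, Finset.card_univ]
        _ ≤ _ := Finset.card_le_card (fun x hx => by
            obtain ⟨z, -, rfl⟩ := Finset.mem_image.mp hx; exact hsub z)
        _ = t ((w u₀).1) := by
            rw [Finset.card_sigma]
            simp
    exact absurd hfin (by have := htm ((w u₀).1); omega)
  · rw [Finset.card_image_of_injective _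
      (fun p p' h => heinj ((Finset.map_injective ι) h))]
    simp [sq]

/-- If `F` is a complete `s`-partite graph (`s ≥ 3`) with nonempty parts,
then for `2 ≤ r ≤ (s-1)(|V(F)|-1)` there is `c > 0` such that for all large `n` there is
an `r`-uniform Berge-`F`-free hypergraph on `n` vertices with at least `c n^2` hyperedges;
consequently `exr r n F = Ω(n^2)`. -/
theorem stmt15 (s : ℕ) (hs : 3 ≤ s) (V : Fin s → Type*) [∀ i, Fintype (V i)]
    [∀ i, Nonempty (V i)]
    (r : ℕ) (hr2 : 2 ≤ r) (hr : r ≤ (s - 1) * (Fintype.card (Σ i, V i) - 1)) :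
    ∃ c : ℝ, 0 < c ∧ ∀ᶠ n : ℕ in atTop,
      (∃ H : Finset (Finset (Fin n)),
        (∀ e ∈ H, e.card = r) ∧ ¬ IsBerge (SimpleGraph.completeMultipartiteGraph V) H ∧
        c * (n : ℝ) ^ 2 ≤ (H.card : ℝ)) ∧
      c * (n : ℝ) ^ 2 ≤ (exr r n (SimpleGraph.completeMultipartiteGraph V) : ℝ) := by
  classical
  have hms : s ≤ Fintype.card ((i : Fin s) × V i) := by
    rw [Fintype.card_sigma]
    calc s = ∑ _i : Fin s, 1 := by simp
      _ ≤ ∑ i, Fintype.card (V i) := Finset.sum_le_sum (fun i _ => Fintype.card_pos)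
  have hm3 : 3 ≤ Fintype.card ((i : Fin s) × V i) := le_trans hs hms
  obtain ⟨k, hk2, hks, hkr, hrk⟩ := exists_k s (Fintype.card ((i : Fin s) × V i) - 1) r hs
    (by omega) hr2 hr
  obtain ⟨t, ht, htsum⟩ := exists_composition (Fintype.card ((i : Fin s) × V i) - 1)
    (by omega) k r hkr hrk
  refine ⟨1 / (4 * (r : ℝ) ^ 2), by positivity, ?_⟩
  rw [Filter.eventually_atTop]
  refine ⟨2 * r * (k + 1), fun n hn => ?_⟩
  have hM1 : k + 1 ≤ n / (2 * r) := by
    rw [Nat.le_div_iff_mul_le (by omega)]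
    calc (k + 1) * (2 * r) = 2 * r * (k + 1) := Nat.mul_comm _ _
      _ ≤ n := hn
  obtain ⟨q, hq, hMq, hq2M⟩ := Nat.exists_prime_lt_and_le_two_mul (n / (2 * r)) (by omega)
  have hqr : q * r ≤ n := by
    calc q * r ≤ 2 * (n / (2 * r)) * r := Nat.mul_le_mul hq2M (le_refl r)
      _ = n / (2 * r) * (2 * r) := by ring
      _ ≤ n := Nat.div_mul_le_self n (2 * r)
  obtain ⟨H, huni, hberge, hHcard⟩ := construction V hs hk2 hks t (fun i => (ht i).1)
    (fun i => by have := (ht i).2; omega) htsum hq (by omega) hqr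
  have hnq : n < 2 * r * q := by
    have hdm := Nat.div_add_mod n (2 * r)
    have hmod := Nat.mod_lt n (show 0 < 2 * r by omega)
    have h1 : 2 * r * (n / (2 * r) + 1) ≤ 2 * r * q := Nat.mul_le_mul (le_refl _) (by omega)
    have h2 : 2 * r * (n / (2 * r) + 1) = 2 * r * (n / (2 * r)) + 2 * r := by ring
    omega
  have hreal : 1 / (4 * (r : ℝ) ^ 2) * (n : ℝ) ^ 2 ≤ ((q : ℝ)) ^ 2 := by
    rw [div_mul_eq_mul_div, one_mul, div_le_iff₀ (by positivity)]
    have hcast : (n : ℝ) ≤ 2 * (r : ℝ) * (q : ℝ) := by exact_mod_cast hnq.le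
    calc (n : ℝ) ^ 2 ≤ (2 * (r : ℝ) * (q : ℝ)) ^ 2 :=
          pow_le_pow_left₀ (by positivity) hcast 2
      _ = (q : ℝ) ^ 2 * (4 * (r : ℝ) ^ 2) := by ring
  have hHreal : 1 / (4 * (r : ℝ) ^ 2) * (n : ℝ) ^ 2 ≤ (H.card : ℝ) := by
    rw [hHcard]
    push_cast
    exact hreal
  refine ⟨⟨H, huni, hberge, hHreal⟩, ?_⟩
  have hbdd : BddAbove {m | ∃ H' : Finset (Finset (Fin n)),
      (∀ e ∈ H', e.card = r) ∧
      ¬ IsBerge (SimpleGraph.completeMultipartiteGraph V) H' ∧ H'.card = m} := by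
    refine ⟨Fintype.card (Finset (Fin n)), ?_⟩
    rintro x ⟨H', -, -, rfl⟩
    rw [← Finset.card_univ]
    exact Finset.card_le_univ H'
  have hmem : H.card ∈ {m | ∃ H' : Finset (Finset (Fin n)),
      (∀ e ∈ H', e.card = r) ∧
      ¬ IsBerge (SimpleGraph.completeMultipartiteGraph V) H' ∧ H'.card = m} :=
    ⟨H, huni, hberge, rfl⟩
  have hle : H.card ≤ exr r n (SimpleGraph.completeMultipartiteGraph V) :=
    le_csSup hbdd hmem
  calc 1 / (4 * (r : ℝ) ^ 2) * (n : ℝ) ^ 2 ≤ (H.card : ℝ) := hHreal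
    _ ≤ _ := by exact_mod_cast hle
end
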